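/- arXiv:2307.03072 — 7 statements merged into one kernel-verified Lean document; each statement's English description precedes it below -/
import Mathlib

section
/- Let q be a prime power, let 𝔽_q be the finite field with q elements, and let k ∈ 𝔽_q. Consider the homogeneous polynomial F_k = x²(x^q y − x y^q) + y²(y^q z − y z^q) + (z² + k x²)(z^q x − z x^q) ∈ 𝔽_q[x,y,z], which vanishes at every 𝔽_q-point of ℙ². Then the curve C_k = {F_k = 0} is smooth at every 𝔽_q-point of ℙ² (i.e., there is no nonzero triple (a,b,c) ∈ 𝔽_q³ at which F_k and all three partial derivatives ∂F_k/∂x, ∂F_k/∂y, ∂F_k/∂z vanish simultaneously) if and only if the polynomial t⁷ + k t³ − 1 has no zeros in 𝔽_q. -/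
open MvPolynomial

/-- The plane-filling polynomial
`F_k = x²(x^q y − x y^q) + y²(y^q z − y z^q) + (z² + k x²)(z^q x − z x^q)`. -/
noncomputable def planeFillingPoly {F : Type*} [Field F] (q : ℕ) (k : F) :
    MvPolynomial (Fin 3) F :=
  X 0 ^ 2 * (X 0 ^ q * X 1 - X 0 * X 1 ^ q)
    + X 1 ^ 2 * (X 1 ^ q * X 2 - X 1 * X 2 ^ q)
    + (X 2 ^ 2 + C k * X 0 ^ 2) * (X 2 ^ q * X 0 - X 2 * X 0 ^ q)

/-!
At an `𝔽_q`-point we have `a^q = a` and `q = 0`, so the gradient of `F_k` collapses to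
`(c³ + k a²c − a²b, a³ − b²c, b³ − ac² − k a³)`. A zero `t` of `t⁷ + k t³ − 1` gives the
singular point `(t : 1 : t³)`. Conversely, at a nonzero common zero both `a` and `b` are
nonzero, and eliminating `c` yields `a⁷ + k a³b⁴ − b⁷ = 0`, so `t = a / b` is a zero.
-/

section Gradient

variable {F : Type*} [Field F] {q : ℕ} {a b c : F}

theorem eval_planeFillingPoly (k : F) (ha : a ^ q = a) (hb : b ^ q = b) (hc : c ^ q = c) :
    eval ![a, b, c] (planeFillingPoly q k) = 0 := by
  simp [planeFillingPoly, ha, hb, hc]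

theorem eval_pderiv_planeFillingPoly (k : F) (hq : (q : F) = 0)
    (ha : a ^ q = a) (hb : b ^ q = b) (hc : c ^ q = c) :
    eval ![a, b, c] (pderiv 0 (planeFillingPoly q k)) = c ^ 3 + k * a ^ 2 * c - a ^ 2 * b ∧
    eval ![a, b, c] (pderiv 1 (planeFillingPoly q k)) = a ^ 3 - b ^ 2 * c ∧
    eval ![a, b, c] (pderiv 2 (planeFillingPoly q k)) = b ^ 3 - a * c ^ 2 - k * a ^ 3 := by
  refine ⟨?_, ?_, ?_⟩ <;>
  · simp [planeFillingPoly, Derivation.leibniz_pow, hq, ha, hb, hc]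
    ring

theorem isSingularAt_planeFillingPoly_iff (k : F) (hq : (q : F) = 0)
    (ha : a ^ q = a) (hb : b ^ q = b) (hc : c ^ q = c) :
    (eval ![a, b, c] (planeFillingPoly q k) = 0 ∧
      eval ![a, b, c] (pderiv 0 (planeFillingPoly q k)) = 0 ∧
      eval ![a, b, c] (pderiv 1 (planeFillingPoly q k)) = 0 ∧
      eval ![a, b, c] (pderiv 2 (planeFillingPoly q k)) = 0) ↔
    (c ^ 3 + k * a ^ 2 * c = a ^ 2 * b ∧ a ^ 3 = b ^ 2 * c ∧ b ^ 3 = a * c ^ 2 + k * a ^ 3) := by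
  obtain ⟨h0, h1, h2⟩ := eval_pderiv_planeFillingPoly k hq ha hb hc
  rw [eval_planeFillingPoly k ha hb hc, h0, h1, h2, sub_eq_zero, sub_eq_zero, sub_sub,
    sub_eq_zero]
  exact and_iff_right rfl

end Gradient

theorem exists_ne_zero_gradient_eq_zero_iff {K : Type*} [Field K] (k : K) :
    (∃ a b c : K, (a, b, c) ≠ (0, 0, 0) ∧
      c ^ 3 + k * a ^ 2 * c = a ^ 2 * b ∧ a ^ 3 = b ^ 2 * c ∧ b ^ 3 = a * c ^ 2 + k * a ^ 3) ↔
    ∃ t : K, t ^ 7 + k * t ^ 3 - 1 = 0 := by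
  constructor
  · rintro ⟨a, b, c, hne, h0, h1, h2⟩
    have ha : a ≠ 0 := by
      rintro rfl
      have hb : b = 0 := pow_eq_zero_iff three_ne_zero |>.mp (by linear_combination h2)
      have hc : c = 0 := pow_eq_zero_iff three_ne_zero |>.mp (by linear_combination h0)
      exact hne (by simp [hb, hc])
    have hb : b ≠ 0 := by
      rintro rfl
      exact ha (pow_eq_zero_iff three_ne_zero |>.mp (by linear_combination h1))
    have elim_c : a ^ 7 + k * a ^ 3 * b ^ 4 - b ^ 7 = 0 := by
      linear_combination a * (a ^ 3 + b ^ 2 * c) * h1 - b ^ 4 * h2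
    refine ⟨a / b, ?_⟩
    field_simp
    linear_combination elim_c
  · rintro ⟨t, ht⟩
    refine ⟨t, 1, t ^ 3, by simp, ?_, by ring, ?_⟩
    · linear_combination t ^ 2 * ht
    · linear_combination -ht

/-- The curve `C_k = {F_k = 0}` is smooth at every `𝔽_q`-point of `ℙ²` if and only if
`t⁷ + k t³ − 1` has no zeros in `𝔽_q`. -/
theorem smooth_at_Fq_points_iff {F : Type*} [Field F] [Fintype F]
    (q : ℕ) (hq : Fintype.card F = q) (k : F) :
    (∀ a b c : F, (a, b, c) ≠ (0, 0, 0) →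
        ¬ (eval ![a, b, c] (planeFillingPoly q k) = 0 ∧
           eval ![a, b, c] (pderiv 0 (planeFillingPoly q k)) = 0 ∧
           eval ![a, b, c] (pderiv 1 (planeFillingPoly q k)) = 0 ∧
           eval ![a, b, c] (pderiv 2 (planeFillingPoly q k)) = 0)) ↔
      ∀ t : F, t ^ 7 + k * t ^ 3 - 1 ≠ 0 := by
  have hq0 : (q : F) = 0 := hq ▸ FiniteField.cast_card_eq_zero F
  have hfrob (x : F) : x ^ q = x := hq ▸ FiniteField.pow_card x
  have hsing (a b c : F) :=
    isSingularAt_planeFillingPoly_iff k hq0 (hfrob a) (hfrob b) (hfrob c)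
  simp only [hsing]
  simpa using (exists_ne_zero_gradient_eq_zero_iff k).not
end

section
/- Let q be a prime power and 𝔽_q the finite field with q elements. Then there exists k ∈ 𝔽_q such that the polynomial x⁷ + k x³ − 1 ∈ 𝔽_q[x] has no zeros in 𝔽_q, i.e., for all x ∈ 𝔽_q, x⁷ + k x³ − 1 ≠ 0. -/
/-- For any finite field `𝔽_q`, there exists `k ∈ 𝔽_q` such that the polynomial
`x⁷ + k x³ − 1` has no zeros in `𝔽_q`. -/
theorem exists_good_k {F : Type*} [Field F] [Fintype F] :
    ∃ k : F, ∀ x : F, x ^ 7 + k * x ^ 3 - 1 ≠ 0 := by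
  classical
  set S : Finset F :=
    (Finset.univ.erase (0 : F)).image (fun x : F => (1 - x ^ 7) * (x ^ 3)⁻¹) with hS
  have hcard : S.card < Fintype.card F := by
    calc S.card ≤ (Finset.univ.erase (0 : F)).card := Finset.card_image_le
    _ < Finset.univ.card := Finset.card_erase_lt_of_mem (Finset.mem_univ 0)
    _ = Fintype.card F := rfl
  obtain ⟨k, hk⟩ : ∃ k, k ∉ S := by
    by_contra h
    push_neg at h
    have hsub : (Finset.univ : Finset F) ⊆ S := fun x _ => h x
    have := Finset.card_le_card hsub
    rw [Finset.card_univ] at this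
    omega
  refine ⟨k, fun x hx => hk ?_⟩
  have hx0 : x ≠ 0 := by
    rintro rfl
    simp at hx
  have hx3 : x ^ 3 ≠ 0 := pow_ne_zero _ hx0
  have hkval : k = (1 - x ^ 7) * (x ^ 3)⁻¹ := by
    field_simp
    linear_combination hx
  rw [hS]
  exact Finset.mem_image.mpr ⟨x, Finset.mem_erase.mpr ⟨hx0, Finset.mem_univ x⟩, hkval.symm⟩
end

section
/- Let q be an odd prime power, let 𝔽_q be the finite field with q elements, and let K be a finite field with q² elements equipped with an 𝔽_q-algebra structure (so K is the quadratic extension 𝔽_{q²} of 𝔽_q). Then there exists k ∈ 𝔽_q such that the plane-filling curve C_k defined by x²(x^q y − x y^q) + y²(y^q z − y z^q) + (z² + k x²)(z^q x − z x^q) = 0 is smooth at every 𝔽_{q²}-point: there is no nonzero triple (a,b,c) ∈ K³ at which the polynomial F_k (with coefficients mapped into K) and all three of its partial derivatives vanish simultaneously. -/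
open MvPolynomial

set_option maxHeartbeats 4000000 in
/-- For odd `q`, there is `k ∈ 𝔽_q` for which the plane-filling curve `C_k` is smooth at
every `𝔽_{q²}`-point. -/
theorem exists_k_smooth_at_Fq2_points {F K : Type*} [Field F] [Fintype F]
    [Field K] [Fintype K] [Algebra F K]
    (q : ℕ) (hq : Fintype.card F = q) (hodd : Odd q) (hK : Fintype.card K = q ^ 2) :
    ∃ k : F, ∀ a b c : K, (a, b, c) ≠ (0, 0, 0) →
      ¬ (aeval ![a, b, c] (planeFillingPoly q k) = 0 ∧
         aeval ![a, b, c] (pderiv 0 (planeFillingPoly q k)) = 0 ∧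
         aeval ![a, b, c] (pderiv 1 (planeFillingPoly q k)) = 0 ∧
         aeval ![a, b, c] (pderiv 2 (planeFillingPoly q k)) = 0) := by
  classical
  have hq1 : 1 < q := hq ▸ Fintype.one_lt_card
  have hq0 : q ≠ 0 := by omega
  have hqF : ((q : F)) = 0 := by rw [← hq]; exact FiniteField.cast_card_eq_zero F
  have hFq : ∀ u : F, u ^ q = u := fun u => by rw [← hq]; exact FiniteField.pow_card u
  have hKq : ∀ t : K, t ^ (q * q) = t := fun t => by
    rw [← pow_two, ← hK]; exact FiniteField.pow_card t
  have halg : Function.Injective (algebraMap F K) := (algebraMap F K).injective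
  -- characteristic setup
  set p : ℕ := ringChar F with hpdef
  haveI hcF : CharP F p := ringChar.charP F
  have hp : p.Prime := CharP.char_is_prime F p
  haveI hfp : Fact p.Prime := ⟨hp⟩
  obtain ⟨n, _, hcard⟩ := FiniteField.card F p
  haveI hcK : CharP K p := charP_of_injective_algebraMap halg p
  have hqpn : q = p ^ (n : ℕ) := by rw [← hq, hcard]
  set φ : K →+* K := iterateFrobenius K p n with hφdef
  have hφ : ∀ t : K, φ t = t ^ q := fun t => by
    rw [hφdef, iterateFrobenius_def, hqpn]
  -- 2 ≠ 0 in K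
  have hqK : ((q : K)) = 0 := by
    have := congrArg (algebraMap F K) hqF
    simpa using this
  have h2K : (2 : K) ≠ 0 := by
    intro h2
    obtain ⟨m, hm⟩ := hodd
    rw [hm] at hqK
    push_cast at hqK
    rw [h2] at hqK
    simp at hqK
  -- rationality lemma
  have hrat : ∀ x : K, x ^ q = x → ∃ u : F, algebraMap F K u = x := by
    intro x hx
    by_contra h
    push_neg at h
    set P : Polynomial K := Polynomial.X ^ q - Polynomial.X with hP
    have hPne : P ≠ 0 := by
      intro h0
      have := congrArg (fun Q => Polynomial.coeff Q q) h0
      simp only [hP, Polynomial.coeff_sub, Polynomial.coeff_X_pow, Polynomial.coeff_X, if_pos rfl,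
        Polynomial.coeff_zero] at this
      rw [if_neg (by omega : ¬ (1 = q))] at this
      norm_num at this
    set T : Finset K := insert x ((Finset.univ : Finset F).image (algebraMap F K)) with hT
    have hTcard : T.card = q + 1 := by
      rw [hT, Finset.card_insert_of_notMem, Finset.card_image_of_injective _ halg,
        Finset.card_univ, hq]
      intro hmem
      obtain ⟨u, _, hu⟩ := Finset.mem_image.1 hmem
      exact h u hu
    have hroots : T ⊆ P.roots.toFinset := by
      intro t ht
      rw [Multiset.mem_toFinset, Polynomial.mem_roots hPne]
      rw [hT] at ht
      rcases Finset.mem_insert.1 ht with rfl | hmem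
      · simp [hP, Polynomial.IsRoot, hx]
      · obtain ⟨u, _, rfl⟩ := Finset.mem_image.1 hmem
        simp [hP, Polynomial.IsRoot, ← map_pow, hFq u]
    have hle : T.card ≤ q := by
      calc T.card ≤ P.roots.toFinset.card := Finset.card_le_card hroots
      _ ≤ Multiset.card P.roots := Multiset.toFinset_card_le _
      _ ≤ P.natDegree := P.card_roots'
      _ ≤ q := by
        rw [hP]
        calc (Polynomial.X ^ q - Polynomial.X : Polynomial K).natDegree
            ≤ max (Polynomial.X ^ q : Polynomial K).natDegree
              (Polynomial.X : Polynomial K).natDegree := Polynomial.natDegree_sub_le _ _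
        _ ≤ q := by simp [Polynomial.natDegree_X_pow]; omega
    omega
  -- choose k avoiding the image of t ↦ t³ - t⁻⁴
  set S : Finset F := (Finset.univ.erase (0 : F)).image (fun t => t ^ 3 - (t⁻¹) ^ 4) with hS
  have hScard : S.card < q := by
    calc S.card ≤ (Finset.univ.erase (0 : F)).card := Finset.card_image_le
    _ = q - 1 := by rw [Finset.card_erase_of_mem (Finset.mem_univ _), Finset.card_univ, hq]
    _ < q := by omega
  have hknotin : ∃ k : F, k ∉ S := by
    by_contra h
    push_neg at h
    have hsub : (Finset.univ : Finset F) ⊆ S := fun x _ => h x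
    have := Finset.card_le_card hsub
    rw [Finset.card_univ, hq] at this
    omega
  obtain ⟨k, hk⟩ := hknotin
  refine ⟨k, ?_⟩
  rintro a b c habc ⟨h0, h1, h2, h3⟩
  set κ : K := algebraMap F K k with hκdef
  have hq0M : ((q : MvPolynomial (Fin 3) F)) = 0 := by
    rw [← C_eq_coe_nat, hqF, map_zero]
  -- explicit evaluations
  have hE0 : a^2*(a^q*b - a*b^q) + b^2*(b^q*c - b*c^q) + (c^2 + κ*a^2)*(c^q*a - c*a^q) = 0 := by
    rw [← h0]
    simp only [planeFillingPoly, map_add, map_sub, map_mul, map_pow, aeval_X, aeval_C,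
      Matrix.cons_val_zero, Matrix.cons_val_one, Matrix.head_cons, Matrix.cons_val_two,
      Matrix.tail_cons, hκdef]
  have hE1 : 2*a*(a^q*b - a*b^q) - a^2*b^q + 2*κ*a*(c^q*a - c*a^q) + (c^2 + κ*a^2)*c^q = 0 := by
    rw [← h1]
    simp only [planeFillingPoly, map_add, map_sub, pderiv_mul, pderiv_pow, pderiv_X_self, pderiv_C,
      pderiv_X_of_ne (show (1:Fin 3) ≠ 0 by decide), pderiv_X_of_ne (show (2:Fin 3) ≠ 0 by decide),
      hq0M]
    simp only [map_add, map_sub, map_mul, map_pow, map_zero, map_one, map_neg, map_ofNat,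
      map_natCast, aeval_X, aeval_C, Matrix.cons_val_zero, Matrix.cons_val_one, Matrix.head_cons,
      Matrix.cons_val_two, Matrix.tail_cons, mul_zero, zero_mul, add_zero, zero_add, mul_one,
      sub_zero, zero_sub, hκdef]
    ring
  have hE2 : a^2*a^q + 2*b*(b^q*c - b*c^q) - b^2*c^q = 0 := by
    rw [← h2]
    simp only [planeFillingPoly, map_add, map_sub, pderiv_mul, pderiv_pow, pderiv_X_self, pderiv_C,
      pderiv_X_of_ne (show (0:Fin 3) ≠ 1 by decide), pderiv_X_of_ne (show (2:Fin 3) ≠ 1 by decide),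
      hq0M]
    simp only [map_add, map_sub, map_mul, map_pow, map_zero, map_one, map_neg, map_ofNat,
      map_natCast, aeval_X, aeval_C, Matrix.cons_val_zero, Matrix.cons_val_one, Matrix.head_cons,
      Matrix.cons_val_two, Matrix.tail_cons, mul_zero, zero_mul, add_zero, zero_add, mul_one,
      sub_zero, zero_sub, hκdef]
    ring
  have hE3 : b^2*b^q + 2*c*(c^q*a - c*a^q) - (c^2 + κ*a^2)*a^q = 0 := by
    rw [← h3]
    simp only [planeFillingPoly, map_add, map_sub, pderiv_mul, pderiv_pow, pderiv_X_self, pderiv_C,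
      pderiv_X_of_ne (show (0:Fin 3) ≠ 2 by decide), pderiv_X_of_ne (show (1:Fin 3) ≠ 2 by decide),
      hq0M]
    simp only [map_add, map_sub, map_mul, map_pow, map_zero, map_one, map_neg, map_ofNat,
      map_natCast, aeval_X, aeval_C, Matrix.cons_val_zero, Matrix.cons_val_one, Matrix.head_cons,
      Matrix.cons_val_two, Matrix.tail_cons, mul_zero, zero_mul, add_zero, zero_add, mul_one,
      sub_zero, zero_sub, hκdef]
    ring
  -- a ≠ 0
  have ha : a ≠ 0 := by
    intro ha0
    rw [ha0] at hE1 hE3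
    rw [zero_pow hq0] at hE1 hE3
    have hb : b = 0 := by
      have hbb : b^2 * b^q = 0 := by linear_combination hE3
      rcases mul_eq_zero.1 hbb with h | h
      · exact pow_eq_zero_iff (n := 2) (by norm_num) |>.1 h
      · exact pow_eq_zero_iff hq0 |>.1 h
    rw [hb] at hE1
    rw [zero_pow hq0] at hE1
    have hc : c = 0 := by
      have hcc : c^2 * c^q = 0 := by linear_combination hE1
      rcases mul_eq_zero.1 hcc with h | h
      · exact pow_eq_zero_iff (n := 2) (by norm_num) |>.1 h
      · exact pow_eq_zero_iff hq0 |>.1 h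
    exact habc (by rw [ha0, hb, hc])
  have haq : a^q ≠ 0 := pow_ne_zero _ ha
  -- normalized coordinates via inverse atoms
  set ia : K := a⁻¹ with hiadef
  set iaq : K := (a^q)⁻¹ with hiaqdef
  have hia : a * ia = 1 := mul_inv_cancel₀ ha
  have hiaq : a^q * iaq = 1 := mul_inv_cancel₀ haq
  set y : K := b * ia with hydef
  set z : K := c * ia with hzdef
  set Y : K := b^q * iaq with hYdef
  set Z : K := c^q * iaq with hZdef
  have hφia : φ ia = iaq := by rw [hiadef, hiaqdef, map_inv₀, hφ]
  have hφiaq : φ iaq = ia := by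
    rw [hiaqdef, hiadef, map_inv₀, hφ, ← pow_mul, hKq]
  have hφy : φ y = Y := by rw [hydef, hYdef, map_mul, hφ, hφia]
  have hφz : φ z = Z := by rw [hzdef, hZdef, map_mul, hφ, hφia]
  have hφY : φ Y = y := by rw [hYdef, hydef, map_mul, hφ, ← pow_mul, hKq, hφiaq]
  have hφZ : φ Z = z := by rw [hZdef, hzdef, map_mul, hφ, ← pow_mul, hKq, hφiaq]
  have hφκ : φ κ = κ := by rw [hφ, hκdef, ← map_pow, hFq]
  -- normalized equations
  have he1 : (y - Y) + y^2*(Y*z - y*Z) + (z^2 + κ)*(Z - z) = 0 := by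
    linear_combination ((1)*ia^3*iaq) * hE0 + ((-1)*c^q*iaq*κ + (1)*b^q*iaq + (1)*c*a^q*ia*iaq*κ + (-1)*c^2*c^q*ia^2*iaq + (-1)*b*a^q*ia*iaq + (-1)*a*c^q*ia*iaq*κ + (1)*a*b^q*ia*iaq + (1)*a*c*a^q*ia^2*iaq*κ + (-1)*a*b*a^q*ia^2*iaq + (-1)*a^2*c^q*ia^2*iaq*κ + (1)*a^2*b^q*ia^2*iaq) * hia + ((1)*c*ia*κ + (1)*c^3*ia^3 + (-1)*b*ia) * hiaq
  have he2 : 2*(y - Y) - Y + 2*κ*(Z - z) + (z^2 + κ)*Z = 0 := by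
    linear_combination ((1)*ia^2*iaq) * hE1 + ((-3)*c^q*iaq*κ + (3)*b^q*iaq + (2)*c*a^q*ia*iaq*κ + (-2)*b*a^q*ia*iaq + (-3)*a*c^q*ia*iaq*κ + (3)*a*b^q*ia*iaq) * hia + ((2)*c*ia*κ + (-2)*b*ia) * hiaq
  have he3 : 1 + 2*y*(Y*z - y*Z) - y^2*Z = 0 := by
    linear_combination ((1)*ia^2*iaq) * hE2 + ((-1)*a^q*iaq + (-1)*a*a^q*ia*iaq) * hia + ((-1)) * hiaq
  have he4 : y^2*Y + 2*z*(Z - z) - (z^2 + κ) = 0 := by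
    linear_combination ((1)*ia^2*iaq) * hE3 + ((1)*a^q*iaq*κ + (-2)*c*c^q*ia*iaq + (1)*a*a^q*ia*iaq*κ) * hia + ((1)*κ + (3)*c^2*ia^2) * hiaq
  -- conjugated equations
  have hb1 : (Y - y) + Y^2*(y*Z - Y*z) + (Z^2 + κ)*(z - Z) = 0 := by
    have h := congrArg φ he1
    simp only [map_add, map_sub, map_mul, map_pow, map_one, map_zero, map_ofNat,
      hφy, hφz, hφY, hφZ, hφκ] at h
    linear_combination h
  have hb2 : 2*(Y - y) - y + 2*κ*(z - Z) + (Z^2 + κ)*z = 0 := by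
    have h := congrArg φ he2
    simp only [map_add, map_sub, map_mul, map_pow, map_one, map_zero, map_ofNat,
      hφy, hφz, hφY, hφZ, hφκ] at h
    linear_combination h
  have hb3 : 1 + 2*Y*(y*Z - Y*z) - Y^2*z = 0 := by
    have h := congrArg φ he3
    simp only [map_add, map_sub, map_mul, map_pow, map_one, map_zero, map_ofNat,
      hφy, hφz, hφY, hφZ, hφκ] at h
    linear_combination h
  have hb4 : Y^2*y + 2*Z*(z - Z) - (Z^2 + κ) = 0 := by
    have h := congrArg φ he4
    simp only [map_add, map_sub, map_mul, map_pow, map_one, map_zero, map_ofNat,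
      hφy, hφz, hφY, hφZ, hφκ] at h
    linear_combination h
  -- y and Y are nonzero
  have hy0 : y ≠ 0 := by
    intro h
    rw [h] at he3
    simp at he3
  have hY0 : Y ≠ 0 := by
    intro h
    rw [h] at hb3
    simp at hb3
  -- Stage 1 : Z = z
  have hZz : Z = z := by
    by_contra hCne
    have hCsub : Z - z ≠ 0 := sub_ne_zero.2 hCne
    set w : K := (Z - z)⁻¹ with hwdef
    have hw : (Z - z) * w = 1 := mul_inv_cancel₀ hCsub
    by_cases h5 : (5 : K) = 0
    · have hone : (1 : K) = 0 := by
        linear_combination ((1) + (2)*y*Y*Z + (1)*y^2*Y^3*w) * he3 + ((1)*y*Y*w) * he4 + ((-2)*y^2*Z + (-1)*y^3*Y^2*w) * hb3 + ((-1)*y*Y*w) * hb4 + ((2)*y*Y*Z + (2)*y*Y*z) * hw + ((-1)*y*Y*Z^2*w + (1)*y*Y*z^2*w + (1)*y^2*Z + (-2)*y^2*Y^2*z*Z + (2)*y^3*Y*Z^2 + (-1)*y^3*Y^4*z*w + (1)*y^4*Y^3*Z*w) * h5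
      exact one_ne_zero hone
    by_cases h31 : (31 : K) = 0
    · have hone : (1 : K) = 0 := by
        linear_combination ((-7)*Y*κ*w + (2)*Y*z + (-8)*Y*z*Z*w + (10)*Y*z^2*w + (9)*Y^2*w^2 + (14)*Y^2*Z*w^3 + (1)*Y^2*z*w^3 + (-15)*y*κ*w + (10)*y*Z + (8)*y*Z^2*w + (10)*y*z + (-8)*y*z*Z*w + (10)*y*z^2*w + (-3)*y*Y*w^2 + (-3)*y*Y*Z*w^3 + (2)*y*Y*z*w^3 + (1)*y^2*w^2 + (14)*y^2*Z*w^3 + (1)*y^2*z*w^3) * he2 + ((-14) + (2)*z*w + (12)*Y*w^3 + (-7)*Y^2*κ*w + (-14)*Y^2*z + (-14)*Y^2*z*Z*w + (-2)*Y^3*w^2 + (9)*Y^3*Z*w^3 + (12)*y*w^3 + (-15)*y*Y*κ*w + (14)*y*Y*Z^2*w + (-14)*y*Y*z*Z*w + (-1)*y*Y^2*w^2 + (-13)*y*Y^2*Z*w^3 + (-15)*y^2*Y*w^2 + (9)*y^2*Y*Z*w^3) * he3 + ((9)*Y*Z*κ*w + (-13)*Y*z*Z + (-13)*Y*z*Z^2*w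 + (7)*Y^2*Z*w^2 + (15)*Y^2*Z^2*w^3 + (6)*y*Z*κ*w + (13)*y*Z^3*w + (-13)*y*z*Z^2*w + (-12)*y*Y*Z*w^2 + (-1)*y*Y*Z^2*w^3 + (6)*y^2*Z*w^2 + (15)*y^2*Z^2*w^3) * he4 + ((-15)*Y*κ*w + (-5)*Y*z + (-5)*Y*z*Z*w + (-10)*Y*z^2*w + (-1)*Y^2*w^2 + (1)*Y^2*Z*w^3 + (-1)*Y^2*z*w^3 + (-10)*y*κ*w + (5)*y*Z^2*w + (-10)*y*z + (-5)*y*z*Z*w + (-10)*y*z^2*w + (-7)*y*Y*w^2 + (2)*y*Y*Z*w^3 + (-2)*y*Y*z*w^3 + (6)*y^2*w^2 + (1)*y^2*Z*w^3 + (-1)*y^2*z*w^3) * hb2 + ((15) + (-2)*z*w + (-12)*Y*w^3 + (-12)*y*w^3 + (-15)*y*Y*κ*w + (1)*y*Y*z + (1)*y*Y*z*Z*w + (9)*y*Y^2*w^2 + (6)*y*Y^2*Z*w^3 + (-10)*y^2*κ*w + (-1)*y^2*Z^2*w + (1)*y^2*z*Z*w + (-11)*y^2*Y*w^2 + (12)*y^2*Y*Z*w^3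 + (-10)*y^3*w^2 + (6)*y^3*Z*w^3) * hb3 + ((-2)*Y*z*Z*κ + (12)*Y*z^2*κ + (10)*Y*z^3*Z + (15)*Y^2*κ*w + (6)*Y^2*Z*κ*w^2 + (-13)*Y^2*z + (-5)*Y^2*z*κ*w^2 + (-13)*Y^2*z*Z*w + (1)*Y^2*z^2*Z*w^2 + (-1)*y*Z^2*κ + (-1)*y*z*Z*κ + (12)*y*z^2*κ + (10)*y*z^3*Z + (-5)*y*Y*κ*w + (12)*y*Y*Z*κ*w^2 + (4)*y*Y*z + (-10)*y*Y*z*κ*w^2 + (2)*y*Y*z^2*Z*w^2 + (-7)*y*Y^2*w^2 + (-10)*y^2*κ*w + (6)*y^2*Z*κ*w^2 + (-12)*y^2*z + (-5)*y^2*z*κ*w^2 + (13)*y^2*z*Z*w + (1)*y^2*z^2*Z*w^2 + (-2)*y^2*Y*w^2 + (5)*y^3*w^2) * hw + ((1)*Y*z*κ^2*w + (-1)*Y*z*Z*κ + (1)*Y*z^2*κ + (-1)*Y*z^2*Z*κ*w + (1)*Y*z^2*Z^2 + (1)*Y*z^2*Z^3*w + (2)*Y*z^3*κ*w + (-1)*Y*z^3*Z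 + (-1)*Y*z^3*Z^2*w + (1)*Y^2*κ*w + (-1)*Y^2*Z*κ*w^2 + (-1)*Y^2*Z^2*κ*w^3 + (2)*Y^2*z + (1)*Y^2*z*κ*w^2 + (1)*Y^2*z*Z*κ*w^3 + (-1)*Y^2*z*Z^3*w^3 + (1)*Y^2*z^2*w + (1)*Y^2*z^2*Z^2*w^3 + (1)*Y^3*w^2 + (1)*Y^3*Z*w^3 + (-1)*Y^3*z*w^3 + (1)*y*Z*κ^2*w + (-1)*y*Z^2*κ + (-1)*y*z*Z*κ + (-1)*y*z*Z^4*w + (2)*y*z^2*κ + (-1)*y*z^2*Z*κ*w + (2)*y*z^2*Z^3*w + (2)*y*z^3*κ*w + (-1)*y*z^3*Z^2*w + (-1)*y*Y*κ*w + (2)*y*Y*z + (1)*y*Y*z*Z^2*w^2 + (-1)*y*Y*z^2*Z*w^2 + (-1)*y*Y^2*w^2 + (-2)*y*Y^2*z*w^3 + (-1)*y*Y^3*z*κ*w + (1)*y*Y^3*z^2 + (1)*y*Y^3*z^2*Z*w + (1)*y*Y^4*z*w^2 + (-2)*y^2*Z + (1)*y^2*Z*κ*w^2 + (-1)*y^2*Z^2*κ*w^3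 + (-2)*y^2*z + (-1)*y^2*z*κ*w^2 + (1)*y^2*z*Z*w + (1)*y^2*z*Z*κ*w^3 + (-1)*y^2*z*Z^2*w^2 + (-1)*y^2*z*Z^3*w^3 + (-2)*y^2*z^2*w + (1)*y^2*z^2*Z*w^2 + (1)*y^2*z^2*Z^2*w^3 + (3)*y^2*Y*Z*w^3 + (-1)*y^2*Y*z*w^3 + (-1)*y^2*Y^2*z*Z + (-2)*y^2*Y^2*z*Z^2*w + (1)*y^2*Y^2*z^2*Z*w + (-1)*y^2*Y^3*Z*w^2 + (-1)*y^2*Y^3*z*w^2 + (2)*y^2*Y^3*z*Z*w^3 + (1)*y^3*w^2 + (-1)*y^3*Y*Z*κ*w + (1)*y^3*Y*Z^3*w + (-1)*y^3*Y*z*Z^2*w + (1)*y^3*Y^2*Z*w^2 + (-2)*y^3*Y^2*Z^2*w^3 + (-1)*y^4*Y*Z*w^2) * h31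
      exact one_ne_zero hone
    have h1550 : (1550 : K) = 0 := by
      linear_combination ((600)*Y*κ*w + (-1155)*Y*z + (-750)*Y*z*κ*w^2 + (1635)*Y*z^2*w + (600)*y*κ*w + (-930)*y*Z + (1635)*y*z + (-750)*y*z*κ*w^2 + (1635)*y*z^2*w + (850)*y*Y*w^2 + (-1550)*y*Y*z*w^3 + (700)*y^2*w^2 + (-1550)*y^2*z*w^3) * he2 + ((1364) + (-600)*κ*w^2 + (1178)*z*w + (513)*Y^2*z + (-450)*Y^2*z*κ*w^2 + (1071)*Y^2*z^2*w + (-1240)*y*w^3 + (558)*y*Y*Z + (1071)*y*Y*z + (-450)*y*Y*z*κ*w^2 + (1071)*y*Y*z^2*w + (-450)*y*Y^2*w^2 + (-930)*y*Y^2*z*w^3 + (-480)*y^2*Y*w^2 + (-930)*y^2*Y*z*w^3) * he3 + ((855)*Y*z*Z + (-750)*Y*z*Z*κ*w^2 + (1785)*Y*z^2*Z*w + (930)*y*Z^2 + (1785)*y*z*Z + (-750)*y*z*Z*κ*w^2 + (1785)*y*z^2*Z*w + (-750)*y*Y*Z*w^2 + (-1550)*y*Y*z*Z*w^3 + (-800)*y^2*Z*w^2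 + (-1550)*y^2*z*Z*w^3) * he4 + ((900)*Y*κ*w + (-1710)*Y*z + (150)*Y*z^2*w + (900)*y*κ*w + (-1860)*y*Z + (150)*y*z + (150)*y*z^2*w + (1500)*y*Y*w^2 + (1600)*y^2*w^2) * hb2 + ((186) + (600)*κ*w^2 + (-1178)*z*w + (1240)*y*w^3 + (342)*y*Y*z + (-300)*y*Y*z*κ*w^2 + (714)*y*Y*z^2*w + (372)*y^2*Z + (714)*y^2*z + (-300)*y^2*z*κ*w^2 + (714)*y^2*z^2*w + (-300)*y^2*Y*w^2 + (-620)*y^2*Y*z*w^3 + (-320)*y^3*w^2 + (-620)*y^3*z*w^3) * hb3 + ((1500)*Y*z*κ^2*w + (-900)*Y*z*Z*κ + (-2820)*Y*z^2*κ + (1500)*Y*z^2*Z*κ*w + (-3720)*Y*z^3*Z + (1500)*y*z*κ^2*w + (-900)*y*z*Z*κ + (-2820)*y*z^2*κ + (1500)*y*z^2*Z*κ*w + (-3720)*y*z^3*Z + (-1500)*y*Y*κ*w + (2356)*y*Y*z + (3100)*y*Y*z*κ*w^2 + (3100)*y*Y*z^2*Z*w^2 + (-1500)*y^2*κ*w +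 (3534)*y^2*z + (3100)*y^2*z*κ*w^2 + (3100)*y^2*z^2*Z*w^2 + (-2480)*y^2*Y*w^2 + (-3720)*y^3*w^2) * hw
    have : (1550 : K) ≠ 0 := by
      have hexp : (1550 : K) = 2 * 5^2 * 31 := by norm_num
      rw [hexp]
      exact mul_ne_zero (mul_ne_zero h2K (pow_ne_zero _ h5)) h31
    exact this h1550
  -- Stage 2 : Y = y
  have hYy : Y = y := by
    rw [hZz] at he4 hb4
    have hyy : y * Y * (y - Y) = 0 := by linear_combination he4 - hb4
    rcases mul_eq_zero.1 hyy with h | h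
    · rcases mul_eq_zero.1 h with h' | h'
      · exact absurd h' hy0
      · exact absurd h' hY0
    · exact (sub_eq_zero.1 h).symm
  -- rationality
  obtain ⟨u, hu⟩ := hrat y (by rw [← hφ, hφy, hYy])
  obtain ⟨v, hv⟩ := hrat z (by rw [← hφ, hφz, hZz])
  -- final equations over F
  rw [hZz] at he3
  rw [hYy] at he3 he4
  rw [hZz] at he4
  have huv : u^2 * v = 1 := by
    apply halg
    rw [map_mul, map_pow, hu, hv, map_one]
    linear_combination -he3
  have hkuv : k = u^3 - v^2 := by
    apply halg
    rw [map_sub, map_pow, map_pow, hu, hv, ← hκdef]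
    linear_combination -he4
  have hu0 : u ≠ 0 := by
    intro h
    rw [h] at huv
    simp at huv
  apply hk
  rw [hS]
  apply Finset.mem_image.2
  refine ⟨u, Finset.mem_erase.2 ⟨hu0, Finset.mem_univ u⟩, ?_⟩
  have hv2 : v = (u⁻¹)^2 := by
    field_simp
    linear_combination huv
  rw [hkuv, hv2]
  ring
end

section
/- Let p be a prime and let K be an algebraic closure of the field 𝔽_p with p elements. Then the polynomial x³y³(x + y)(x² + y²) + (x² + xy + y²) is irreducible in the polynomial ring K[x,y]. -/
/-!
Write the polynomial as `B + A` with `A = x² + xy + y²` and `B = x³y³(x + y)(x² + y²)`, forms of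
degrees 2 and 9. Substituting `x ↦ tx`, `y ↦ ty` turns it into `t² (B t⁷ + A)` in `K[x,y][t]`, and
`t = 1` undoes the substitution; so from a factorisation one factor absorbs the prime `B t⁷ + A`
and the other must be a unit. `B t⁷ + A` is primitive because `A` and `B` are coprime, so by Gauss's
lemma it is irreducible as soon as `-A/B` is not a 7th power in `K(x,y)`: `x` divides `B` exactly
three times and does not divide `A`.
-/

theorem irreducible_of_map_eq_mul_prime {R S F G : Type*} [CommMonoid R] [CommMonoidWithZero S]
    [IsCancelMulZero S] [FunLike F R S] [MonoidHomClass F R S] [FunLike G S R]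
    [MonoidHomClass G S R] (φ : F) (ε : G) (hε : Function.LeftInverse ε φ) {f : R} {u q : S}
    (hq : Prime q) (hu : IsUnit (ε u)) (hf : φ f = u * q) : Irreducible f := by
  have cofactor_isUnit : ∀ g h, f = g * h → q ∣ φ g → IsUnit h := by
    rintro g h rfl ⟨r, hr⟩
    have hu' : u = r * φ h := by
      refine mul_right_cancel₀ hq.ne_zero ?_
      rw [← hf, map_mul, hr]
      ac_rfl
    rw [hu', map_mul, hε] at hu
    exact isUnit_of_mul_isUnit_right hu
  refine ⟨fun hf' => hq.not_isUnit (isUnit_of_mul_isUnit_right (hf ▸ hf'.map φ)),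
    fun g h hgh => ?_⟩
  have hdvd : q ∣ φ g * φ h := ⟨u, by rw [← map_mul, ← hgh, hf, mul_comm]⟩
  rcases hq.dvd_or_dvd hdvd with hg | hh
  · exact Or.inr (cofactor_isUnit g h hgh hg)
  · exact Or.inl (cofactor_isUnit h g (hgh.trans (mul_comm g h)) hh)

theorem pow_mul_add_pow_mul_ne_zero {R : Type*} [CommRing R] [IsDomain R] [WfDvdMonoid R]
    {π a b : R} {n : ℕ} (hπ : Prime π) (ha : ¬π ∣ a) (hn : ¬n ∣ multiplicity π b)
    (c : R) {d : R} (hd : d ≠ 0) : c ^ n * b + d ^ n * a ≠ 0 := by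
  intro h
  rw [add_eq_zero_iff_eq_neg] at h
  have hda : d ^ n * a ≠ 0 := mul_ne_zero (pow_ne_zero n hd) (fun h0 => ha (h0 ▸ dvd_zero π))
  have hcb : c ^ n * b ≠ 0 := h ▸ neg_ne_zero.mpr hda
  obtain rfl | hn0 := eq_or_ne n 0
  · simp only [pow_zero, one_mul] at h
    rw [h, multiplicity_neg, multiplicity_eq_zero.mpr ha] at hn
    exact hn (dvd_refl 0)
  have hc : c ≠ 0 := ne_zero_pow hn0 (left_ne_zero_of_mul hcb)
  have hfin_c : FiniteMultiplicity π c := .of_prime_left hπ hc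
  have hfin_d : FiniteMultiplicity π d := .of_prime_left hπ hd
  have hmult := congrArg (multiplicity π) h
  rw [multiplicity_neg, multiplicity_mul hπ (.of_prime_left hπ hcb),
    multiplicity_mul hπ (.of_prime_left hπ hda), hfin_c.multiplicity_pow hπ,
    hfin_d.multiplicity_pow hπ, multiplicity_eq_zero.mpr ha, add_zero] at hmult
  exact hn ((Nat.dvd_add_right (dvd_mul_right n _)).mp (hmult ▸ dvd_mul_right n _))

theorem not_dvd_of_map_eq_zero {R S F : Type*} [CommMonoidWithZero R] [CommMonoidWithZero S]
    [FunLike F R S] [MonoidWithZeroHomClass F R S] (f : F) {a b : R} (ha : f a = 0)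
    (hb : f b ≠ 0) : ¬a ∣ b :=
  fun h => hb (zero_dvd_iff.mp (ha ▸ map_dvd f h))

open Polynomial in
theorem Polynomial.irreducible_C_mul_X_pow_add_C {R : Type*} [CommRing R] [IsDomain R]
    [IsGCDMonoid R] {a b : R} {n : ℕ} (hn : n.Prime) (hab : IsRelPrime a b) (hb : b ≠ 0)
    (hpow : ∀ c d : R, d ≠ 0 → c ^ n * b + d ^ n * a ≠ 0) : Irreducible (C b * X ^ n + C a) := by
  have hprim : (C b * X ^ n + C a).IsPrimitive := by
    refine isPrimitive_iff_isUnit_of_C_dvd.mpr fun r hr => hab ?_ ?_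
    · simpa [coeff_C, hn.ne_zero, hn.ne_zero.symm] using (C_dvd_iff_dvd_coeff _ _).mp hr 0
    · simpa [coeff_C, hn.ne_zero, hn.ne_zero.symm] using (C_dvd_iff_dvd_coeff _ _).mp hr n
  let F := FractionRing R
  have hinj : Function.Injective (algebraMap R F) := IsFractionRing.injective R F
  have hb' : algebraMap R F b ≠ 0 := (map_ne_zero_iff _ hinj).mpr hb
  set s : F := -(algebraMap R F a / algebraMap R F b)
  have hbs : algebraMap R F b * s = -algebraMap R F a := by
    rw [mul_neg, mul_div_cancel₀ _ hb']
  have hmap :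
      (C b * X ^ n + C a).map (algebraMap R F) = C (algebraMap R F b) * (X ^ n - C s) := by
    rw [mul_sub, ← C_mul, hbs, map_neg, sub_neg_eq_add]
    simp only [Polynomial.map_add, Polynomial.map_mul, Polynomial.map_pow, map_C, map_X]
  have hroot : ∀ y : F, y ^ n ≠ s := by
    intro y hy
    obtain ⟨c, d, hd, rfl⟩ := IsFractionRing.div_surjective (A := R) y
    have hd' : algebraMap R F d ≠ 0 := (map_ne_zero_iff _ hinj).mpr (nonZeroDivisors.ne_zero hd)
    refine hpow c d (nonZeroDivisors.ne_zero hd) (hinj ?_)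
    rw [div_pow, div_eq_iff (pow_ne_zero n hd')] at hy
    simp only [map_add, map_mul, map_pow, map_zero]
    linear_combination algebraMap R F b * hy + algebraMap R F d ^ n * hbs
  rw [hprim.irreducible_iff_irreducible_map_fraction_map (K := F), hmap,
    irreducible_isUnit_mul (isUnit_C.mpr hb'.isUnit)]
  exact X_pow_sub_C_irreducible_of_prime hn hroot

open MvPolynomial

namespace MvPolynomial

variable {σ R : Type*} [CommRing R]

noncomputable def scaleVars : MvPolynomial σ R →ₐ[R] Polynomial (MvPolynomial σ R) :=
  aeval fun i => Polynomial.C (X i) * Polynomial.X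

@[simp]
theorem scaleVars_C (r : R) : scaleVars (C r : MvPolynomial σ R) = Polynomial.C (C r) :=
  aeval_C _ r

@[simp]
theorem scaleVars_X (i : σ) :
    scaleVars (X i : MvPolynomial σ R) = Polynomial.C (X i) * Polynomial.X :=
  aeval_X _ i

theorem eval_one_scaleVars (p : MvPolynomial σ R) : (scaleVars p).eval 1 = p := by
  induction p using MvPolynomial.induction_on with
  | C a => simp
  | add p q hp hq => simp [hp, hq]
  | mul_X p i hp => simp [hp]

theorem scaleVars_monomial (d : σ →₀ ℕ) (r : R) :
    scaleVars (monomial d r) = Polynomial.C (monomial d r) * Polynomial.X ^ d.degree := by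
  simp only [monomial_eq, Finsupp.prod, map_mul, map_prod, map_pow, scaleVars_C, scaleVars_X,
    mul_pow, Finset.prod_mul_distrib, Finset.prod_pow_eq_pow_sum, Finsupp.degree_apply, mul_assoc]

theorem IsHomogeneous.scaleVars_eq {p : MvPolynomial σ R} {n : ℕ} (hp : p.IsHomogeneous n) :
    scaleVars p = Polynomial.C p * Polynomial.X ^ n := by
  induction hp using IsWeightedHomogeneous.induction_on with
  | zero => simp
  | add p q _ _ hp hq => simp [hp, hq, add_mul]
  | monomial d r hr =>
    rw [scaleVars_monomial, Finsupp.degree_eq_weight_one, ← Pi.one_def, hr]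

theorem irreducible_add_of_isHomogeneous [IsDomain R] [UniqueFactorizationMonoid R]
    {a b π : MvPolynomial σ R} {m k : ℕ} (ha : a.IsHomogeneous m)
    (hb : b.IsHomogeneous (m + k)) (hk : k.Prime) (hab : IsRelPrime a b) (hb0 : b ≠ 0)
    (hπ : Prime π) (hπa : ¬π ∣ a) (hπb : ¬k ∣ multiplicity π b) : Irreducible (b + a) := by
  let := UniqueFactorizationMonoid.toGCDMonoid (MvPolynomial σ R)
  have hq : Irreducible (Polynomial.C b * Polynomial.X ^ k + Polynomial.C a) :=
    Polynomial.irreducible_C_mul_X_pow_add_C hk hab hb0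
      fun c _ hd => pow_mul_add_pow_mul_ne_zero hπ hπa hπb c hd
  refine irreducible_of_map_eq_mul_prime scaleVars (Polynomial.evalRingHom 1) eval_one_scaleVars
    hq.prime (u := Polynomial.X ^ m) (by simp) ?_
  rw [map_add, hb.scaleVars_eq, ha.scaleVars_eq]
  ring

end MvPolynomial

namespace IrreducibleAuxPoly

variable {K : Type*} [Field K]

local notation "K[x,y]" => MvPolynomial (Fin 2) K

noncomputable def lowForm : K[x,y] := X 0 ^ 2 + X 0 * X 1 + X 1 ^ 2

noncomputable def highForm : K[x,y] :=
  X 0 ^ 3 * X 1 ^ 3 * (X 0 + X 1) * (X 0 ^ 2 + X 1 ^ 2)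

theorem isHomogeneous_lowForm : (lowForm : K[x,y]).IsHomogeneous 2 :=
  ((isHomogeneous_X_pow _ 2).add ((isHomogeneous_X _ _).mul (isHomogeneous_X _ _))).add
    (isHomogeneous_X_pow _ 2)

theorem isHomogeneous_highForm : (highForm : K[x,y]).IsHomogeneous (2 + 7) :=
  (((isHomogeneous_X_pow _ 3).mul (isHomogeneous_X_pow _ 3)).mul
    ((isHomogeneous_X _ _).add (isHomogeneous_X _ _))).mul
      ((isHomogeneous_X_pow _ 2).add (isHomogeneous_X_pow _ 2))

theorem not_X_zero_dvd {p : K[x,y]} (hp : aeval ![0, (X 1 : K[x,y])] p ≠ 0) :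
    ¬X 0 ∣ p :=
  not_dvd_of_map_eq_zero (aeval ![0, (X 1 : K[x,y])]) (by simp) hp

theorem not_X_one_dvd {p : K[x,y]} (hp : aeval ![(X 0 : K[x,y]), 0] p ≠ 0) :
    ¬X 1 ∣ p :=
  not_dvd_of_map_eq_zero (aeval ![(X 0 : K[x,y]), 0]) (by simp) hp

theorem not_X_zero_dvd_lowForm : ¬(X 0 : K[x,y]) ∣ lowForm :=
  not_X_zero_dvd (by simp [lowForm, X_ne_zero])

theorem exists_highForm_eq_X_zero_pow_three_mul :
    ∃ r, ¬(X 0 : K[x,y]) ∣ r ∧ highForm = X 0 ^ 3 * r :=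
  ⟨X 1 ^ 3 * (X 0 + X 1) * (X 0 ^ 2 + X 1 ^ 2), not_X_zero_dvd (by simp [X_ne_zero]),
    by rw [highForm]; ring⟩

theorem highForm_ne_zero : (highForm : K[x,y]) ≠ 0 := by
  obtain ⟨r, hr, hform⟩ := exists_highForm_eq_X_zero_pow_three_mul (K := K)
  rw [hform]
  exact mul_ne_zero (pow_ne_zero 3 (X_ne_zero 0)) fun h => hr (h ▸ dvd_zero _)

theorem multiplicity_X_zero_highForm :
    multiplicity (X 0 : K[x,y]) highForm = 3 := by
  obtain ⟨r, hr, hform⟩ := exists_highForm_eq_X_zero_pow_three_mul (K := K)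
  rw [hform, multiplicity_mul X_prime (.of_prime_left X_prime (hform ▸ highForm_ne_zero)),
    multiplicity_pow_self_of_prime X_prime, multiplicity_eq_zero.mpr hr]

theorem isRelPrime_lowForm_highForm : IsRelPrime (lowForm : K[x,y]) highForm := by
  let := UniqueFactorizationMonoid.toGCDMonoid (K[x,y])
  have isRelPrime_X {i : Fin 2} {p : K[x,y]} (h : ¬X i ∣ p) : IsRelPrime (X i) p :=
    X_prime.irreducible.isRelPrime_iff_not_dvd.mpr h
  have hx : IsRelPrime lowForm (X 0 : K[x,y]) :=
    (isRelPrime_X not_X_zero_dvd_lowForm).symm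
  have hy : IsRelPrime lowForm (X 1 : K[x,y]) :=
    (isRelPrime_X (not_X_one_dvd (by simp [lowForm, X_ne_zero]))).symm
  have hsum : IsRelPrime lowForm (X 0 + X 1 : K[x,y]) := by
    rw [show (lowForm : K[x,y]) = X 1 ^ 2 + (X 0 + X 1) * X 0 by
      rw [lowForm]; ring]
    exact (isRelPrime_X (not_X_one_dvd (by simp [X_ne_zero]))).pow_left.add_mul_left_left _
  have hsq : IsRelPrime lowForm (X 0 ^ 2 + X 1 ^ 2 : K[x,y]) := by
    rw [show (lowForm : K[x,y]) = X 0 * X 1 + (X 0 ^ 2 + X 1 ^ 2) * 1 by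
      rw [lowForm]; ring]
    exact ((isRelPrime_X (not_X_zero_dvd (by simp [X_ne_zero]))).mul_left
      (isRelPrime_X (not_X_one_dvd (by simp [X_ne_zero])))).add_mul_left_left _
  exact ((hx.pow_right.mul_right hy.pow_right).mul_right hsum).mul_right hsq

end IrreducibleAuxPoly

theorem irreducible_aux_poly_general (K : Type*) [Field K] :
    Irreducible (X 0 ^ 3 * X 1 ^ 3 * (X 0 + X 1) * (X 0 ^ 2 + X 1 ^ 2)
      + (X 0 ^ 2 + X 0 * X 1 + X 1 ^ 2) : MvPolynomial (Fin 2) K) := by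
  open IrreducibleAuxPoly in
  change Irreducible (highForm + lowForm)
  exact irreducible_add_of_isHomogeneous isHomogeneous_lowForm isHomogeneous_highForm
    (by norm_num) isRelPrime_lowForm_highForm highForm_ne_zero X_prime not_X_zero_dvd_lowForm
    (by rw [multiplicity_X_zero_highForm]; norm_num)

/-- The polynomial `x³y³(x + y)(x² + y²) + (x² + xy + y²)` is irreducible over the
algebraic closure of `𝔽_p`. -/
theorem irreducible_aux_poly (p : ℕ) [Fact p.Prime] (K : Type*) [Field K]
    [Algebra (ZMod p) K] [IsAlgClosure (ZMod p) K] :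
    Irreducible (X 0 ^ 3 * X 1 ^ 3 * (X 0 + X 1) * (X 0 ^ 2 + X 1 ^ 2)
      + (X 0 ^ 2 + X 0 * X 1 + X 1 ^ 2) : MvPolynomial (Fin 2) K) :=
  irreducible_aux_poly_general K
end

section
/- Let q be a prime power, let 𝔽_q be the finite field with q elements, and let K be a finite field with q² elements equipped with an 𝔽_q-algebra structure. Let F ∈ 𝔽_q[x,y,z] be a homogeneous polynomial of degree d with d ≤ q + 4 such that: (i) F vanishes at every nonzero triple (a,b,c) ∈ 𝔽_q³ (the curve C = {F = 0} is plane-filling); (ii) C is smooth at every 𝔽_q-point, i.e., for every nonzero (a,b,c) ∈ 𝔽_q³ the three partial derivatives of F do not all vanish at (a,b,c); and (iii) no nonzero homogeneous polynomial of degree 1 over 𝔽_q divides F. Then C is smooth at every 𝔽_{q²}-point: there is no nonzero triple (a,b,c) ∈ K³ at which F (with coefficients mapped into K) and all three of its partial derivatives vanish simultaneously. -/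
/-!
Let `P` be a singular point of `C` over `𝔽_{q²}` and `φ` the `q`-power Frobenius, an involution
of `𝔽_{q²}`. If `φ P` is proportional to `P`, then `P` is a multiple of an `𝔽_q`-point, at which
`C` would be singular. Otherwise `P` and `φ P` span a line defined over `𝔽_q`. Restricted to it,
`F` is a binary form of degree `d ≤ q + 4` with double zeros at the singular points `P` and `φ P`
and zeros at the `q + 1` points `s P + φ (s P)` (`s ≠ 0`), which are `𝔽_q`-rational. Since
`q + 5 > d` the form vanishes, so the line is an `𝔽_q`-linear component of `C`.
-/

open Finset MvPolynomial Matrix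

namespace Polynomial

variable {R : Type*} [CommSemiring R]

theorem natDegree_C_add_C_mul_X_le (a b : R) : (C a + C b * X).natDegree ≤ 1 := by
  rw [natDegree_C_add]
  exact (natDegree_C_mul_le b X).trans natDegree_X_le

theorem reflect_C_add_C_mul_X (a b : R) : (C a + C b * X).reflect 1 = C b + C a * X := by
  rw [reflect_add, reflect_C_mul, reflect_one_X, reflect_C, pow_one, mul_one, add_comm]

theorem reflect_pow {p : R[X]} {N : ℕ} (hp : p.natDegree ≤ N) (k : ℕ) :
    (p ^ k).reflect (k * N) = p.reflect N ^ k := by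
  induction k with
  | zero => simp [reflect_one]
  | succ k ih =>
    rw [pow_succ, Nat.succ_mul, reflect_mul _ _ (natDegree_pow_le_of_le k hp) hp, ih, pow_succ]

theorem reflect_prod {ι : Type*} (s : Finset ι) {f : ι → R[X]} {N : ι → ℕ}
    (hf : ∀ i ∈ s, (f i).natDegree ≤ N i) :
    (∏ i ∈ s, f i).reflect (∑ i ∈ s, N i) = ∏ i ∈ s, (f i).reflect (N i) := by
  induction s using Finset.cons_induction with
  | empty => simp [reflect_one]
  | cons a s ha ih =>
    rw [Finset.forall_mem_cons] at hf
    rw [Finset.prod_cons, Finset.sum_cons, Finset.prod_cons,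
      reflect_mul _ _ hf.1 ((natDegree_prod_le _ _).trans (Finset.sum_le_sum hf.2)), ih hf.2]

theorem eq_zero_of_X_sq_dvd_of_X_sq_dvd_reflect {K : Type*} [Field K] {p : K[X]} {n : ℕ}
    (hdeg : p.natDegree ≤ n) (h₀ : X ^ 2 ∣ p) (hrev : X ^ 2 ∣ p.reflect n) {S : Finset K}
    (hS₀ : 0 ∉ S) (hS : ∀ s ∈ S, p.eval s = 0) (hn : n < #S + 4) : p = 0 := by
  by_contra hp
  obtain ⟨g, rfl⟩ := h₀
  have hg : g ≠ 0 := right_ne_zero_of_mul hp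
  have hcard : #S ≤ g.natDegree := card_le_degree_of_subset_roots fun s hs => by
    have hs0 : s ≠ 0 := fun h => hS₀ (h ▸ hs)
    simpa [mem_roots hg, hs0] using hS s hs
  rw [natDegree_X_pow_mul (n := 2) hg] at hdeg
  have hlead : (X ^ 2 * g).coeff (g.natDegree + 2) ≠ 0 := by
    rw [coeff_X_pow_mul]; exact leadingCoeff_ne_zero.2 hg
  rw [X_pow_dvd_iff] at hrev
  have h0 := hrev 0 (by norm_num)
  have h1 := hrev 1 (by norm_num)
  rw [coeff_reflect, revAt_zero] at h0
  rw [coeff_reflect] at h1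
  rcases Nat.lt_or_ge n 1 with hn1 | hn1
  · omega
  · rw [revAt_le hn1] at h1
    have : g.natDegree + 2 ≠ n := fun h => hlead (h ▸ h0)
    have : g.natDegree + 2 ≠ n - 1 := fun h => hlead (h ▸ h1)
    omega

end Polynomial

section CrossProduct

theorem comp_crossProduct {R S : Type*} [CommRing R] [CommRing S] (f : R →+* S) (u v : Fin 3 → R) :
    f ∘ (u ⨯₃ v) = (f ∘ u) ⨯₃ (f ∘ v) := by
  ext i
  fin_cases i <;> simp [cross_apply]

variable {K : Type*} [Field K]

theorem exists_eq_smul_of_cross_eq_zero {u v : Fin 3 → K} (hu : u ≠ 0) (h : u ⨯₃ v = 0) :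
    ∃ c : K, v = c • u := by
  have := crossProduct_ne_zero_iff_linearIndependent.not.1 (not_not.2 h)
  simpa [LinearIndependent.pair_iff' hu, eq_comm] using this

theorem exists_eq_smul_add_smul_of_dotProduct_cross_eq_zero {u v x : Fin 3 → K}
    (h : u ⨯₃ v ≠ 0) (hx : x ⬝ᵥ u ⨯₃ v = 0) : ∃ a b : K, x = a • u + b • v := by
  obtain ⟨j, hj⟩ : ∃ j, (u ⨯₃ v) j ≠ 0 := Function.ne_iff.1 h
  set y := Pi.single j (1 : K) ⨯₃ x
  -- expand `(u ⨯₃ v) ⨯₃ (eⱼ ⨯₃ x)` in two ways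
  have key : (u ⨯₃ v) j • x = (v ⬝ᵥ y) • u - (u ⬝ᵥ y) • v := by
    have := cross_cross_eq_smul_sub_smul' (u ⨯₃ v) (Pi.single j 1) x
    rw [cross_cross_eq_smul_sub_smul, dotProduct_comm _ x, hx, single_dotProduct, one_mul] at this
    linear_combination (norm := module) this
  refine ⟨((u ⨯₃ v) j)⁻¹ * (v ⬝ᵥ y), -(((u ⨯₃ v) j)⁻¹ * (u ⬝ᵥ y)), ?_⟩
  rw [← inv_smul_smul₀ hj x, key]
  module

end CrossProduct

namespace MvPolynomial

variable {σ R S : Type*} [CommSemiring R] [CommSemiring S] [Algebra R S]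
  {F : MvPolynomial σ R} {n : ℕ}

theorem IsHomogeneous.aeval_smul (hF : F.IsHomogeneous n) (t : S) (x : σ → S) :
    MvPolynomial.aeval (t • x) F = t ^ n * MvPolynomial.aeval x F := by
  induction hF using IsWeightedHomogeneous.induction_on with
  | zero => simp
  | add p q _ _ hp hq => simp [hp, hq, mul_add]
  | monomial m r hm =>
    rw [← hm]
    simp only [aeval_monomial, Finsupp.prod, Pi.smul_apply, smul_eq_mul, mul_pow,
      Finset.prod_mul_distrib, Finset.prod_pow_eq_pow_sum, Finsupp.weight_apply, Pi.one_apply,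
      Finsupp.sum, mul_one]
    ring

noncomputable def restrictLine (F : MvPolynomial σ R) (A B : σ → S) : Polynomial S :=
  aeval (fun i => Polynomial.C (A i) + Polynomial.C (B i) * Polynomial.X) F

variable (A B : σ → S)

theorem eval_restrictLine (t : S) : (restrictLine F A B).eval t = aeval (A + t • B) F := by
  rw [← Polynomial.coe_aeval_eq_eval, restrictLine, ← AlgHom.restrictScalars_apply R,
    comp_aeval_apply]
  congr 2
  funext i
  simp [mul_comm (B i)]

theorem restrictLine_map (T : Type*) [CommSemiring T] [Algebra R T] [Algebra S T]
    [IsScalarTower R S T] :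
    (restrictLine F A B).map (algebraMap S T) =
      restrictLine F (algebraMap S T ∘ A) (algebraMap S T ∘ B) := by
  have := comp_aeval_apply (fun i => Polynomial.C (A i) + Polynomial.C (B i) * Polynomial.X)
    ((Polynomial.mapAlgHom (IsScalarTower.toAlgHom R S T)).restrictScalars R) F
  simpa [restrictLine] using this

theorem coeff_zero_restrictLine : (restrictLine F A B).coeff 0 = aeval A F := by
  simp [Polynomial.coeff_zero_eq_eval_zero, eval_restrictLine]

theorem coeff_one_restrictLine [Fintype σ] [DecidableEq σ] :
    (restrictLine F A B).coeff 1 = ∑ i, B i * aeval A (pderiv i F) := by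
  induction F using MvPolynomial.induction_on with
  | C c => simp [restrictLine]
  | add p q hp hq =>
    simp only [restrictLine, map_add, Polynomial.coeff_add] at hp hq ⊢
    simp [hp, hq, Finset.sum_add_distrib, mul_add]
  | mul_X p j hp =>
    have h0 := coeff_zero_restrictLine (F := p) A B
    simp only [restrictLine] at hp h0 ⊢
    simp only [map_mul, aeval_X, mul_add, Polynomial.coeff_add, Polynomial.coeff_mul_C,
      ← mul_assoc, Polynomial.coeff_mul_X, hp, h0, Derivation.leibniz, pderiv_X, Pi.single_apply,
      smul_eq_mul, mul_ite, mul_one, mul_zero, map_add, Finset.sum_add_distrib, Finset.sum_mul,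
      apply_ite (aeval A), map_zero, Finset.sum_ite_eq, Finset.mem_univ, if_true]
    rw [add_comm, mul_comm]
    congr 1
    exact Finset.sum_congr rfl fun _ _ => by ring

theorem restrictLine_monomial (m : σ →₀ ℕ) (r : R) :
    restrictLine (monomial m r) A B = Polynomial.C (algebraMap R S r) *
      ∏ i ∈ m.support, (Polynomial.C (A i) + Polynomial.C (B i) * Polynomial.X) ^ m i := by
  rw [restrictLine, aeval_monomial, Polynomial.algebraMap_apply, Finsupp.prod]

theorem natDegree_restrictLine_le (hF : F.IsHomogeneous n) :
    (restrictLine F A B).natDegree ≤ n := by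
  induction hF using IsWeightedHomogeneous.induction_on with
  | zero => simp [restrictLine]
  | add p q _ _ hp hq =>
    simp only [restrictLine, map_add] at hp hq ⊢
    exact Polynomial.natDegree_add_le_of_degree_le hp hq
  | monomial m r hm =>
    rw [restrictLine_monomial, ← hm]
    refine (Polynomial.natDegree_C_mul_le _ _).trans <| (Polynomial.natDegree_prod_le _ _).trans ?_
    simp only [Finsupp.weight_apply, Finsupp.sum, Pi.one_apply, smul_eq_mul]
    exact Finset.sum_le_sum fun i _ =>
      Polynomial.natDegree_pow_le_of_le _ (Polynomial.natDegree_C_add_C_mul_X_le _ _)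

theorem reflect_restrictLine (hF : F.IsHomogeneous n) :
    (restrictLine F A B).reflect n = restrictLine F B A := by
  induction hF using IsWeightedHomogeneous.induction_on with
  | zero => simp [restrictLine]
  | add p q _ _ hp hq =>
    simp only [restrictLine, map_add, Polynomial.reflect_add] at hp hq ⊢
    rw [hp, hq]
  | monomial m r hm =>
    rw [restrictLine_monomial, restrictLine_monomial, ← hm]
    simp only [Finsupp.weight_apply, Finsupp.sum, Pi.one_apply, smul_eq_mul]
    rw [Polynomial.reflect_C_mul, Polynomial.reflect_prod _ fun i _ =>
      Polynomial.natDegree_pow_le_of_le _ (Polynomial.natDegree_C_add_C_mul_X_le _ _)]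
    simp only [Polynomial.reflect_pow (Polynomial.natDegree_C_add_C_mul_X_le _ _),
      Polynomial.reflect_C_add_C_mul_X]

theorem X_sq_dvd_restrictLine [Fintype σ] [DecidableEq σ] (hA : aeval A F = 0)
    (hcrit : ∀ i, aeval A (pderiv i F) = 0) : Polynomial.X ^ 2 ∣ restrictLine F A B := by
  rw [Polynomial.X_pow_dvd_iff]
  intro m hm
  interval_cases m
  · rwa [coeff_zero_restrictLine]
  · simp [coeff_one_restrictLine, hcrit]

theorem IsHomogeneous.aeval_smul_add_smul_eq_zero {K : Type*} [Field K] [Algebra R K]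
    (hF : F.IsHomogeneous n) {A B : σ → K} (hline : restrictLine F A B = 0)
    (hB : MvPolynomial.aeval B F = 0) (a b : K) : MvPolynomial.aeval (a • A + b • B) F = 0 := by
  rcases eq_or_ne a 0 with rfl | ha
  · rw [zero_smul, zero_add, hF.aeval_smul, hB, mul_zero]
  · have : a • A + b • B = a • (A + (b / a) • B) := by
      rw [smul_add, smul_smul, mul_div_cancel₀ _ ha]
    rw [this, hF.aeval_smul, ← eval_restrictLine, hline, Polynomial.eval_zero, mul_zero]

theorem sum_C_mul_X_dvd_of_forall_aeval_eq_zero {σ k Ω : Type*} [Fintype σ] [DecidableEq σ]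
    [Field k] [Field Ω] [Infinite Ω] [Algebra k Ω] {e : σ → k} (he : e ≠ 0)
    {F : MvPolynomial σ k}
    (hF : ∀ x : σ → Ω, aeval x (∑ i, C (e i) * X i) = 0 → aeval x F = 0) :
    (∑ i, C (e i) * X i) ∣ F := by
  obtain ⟨j, hj⟩ : ∃ j, e j ≠ 0 := Function.ne_iff.1 he
  set L : MvPolynomial σ k := ∑ i, C (e i) * X i
  -- `g` projects onto `L = 0` along the `j`-th axis: `F ∘ g ≡ F` mod `L`, and `F ∘ g = 0`
  -- because `F` vanishes on `L = 0`
  set g : σ → MvPolynomial σ k := X - Pi.single j (C (e j)⁻¹ * L)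
  have hgL : aeval g L = 0 := by
    simp only [L, map_sum, map_mul, aeval_C, aeval_X, algebraMap_eq, g, Pi.sub_apply,
      Pi.single_apply, mul_sub, Finset.sum_sub_distrib, mul_ite, mul_zero, Finset.sum_ite_eq',
      Finset.mem_univ, if_true]
    rw [← mul_assoc, ← C_mul, mul_inv_cancel₀ hj, C_1, one_mul, sub_self]
  have hgF : aeval g F = 0 := by
    refine MvPolynomial.map_injective _ (algebraMap k Ω).injective (MvPolynomial.funext fun x => ?_)
    rw [eval_map, ← aeval_def, comp_aeval_apply, map_zero, map_zero]
    refine hF _ ?_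
    rw [← comp_aeval_apply, hgL, map_zero]
  have hmk : Ideal.Quotient.mk (Ideal.span {L}) (aeval g F) = Ideal.Quotient.mk _ F := by
    rw [← Ideal.Quotient.mkₐ_eq_mk k, ← AlgHom.comp_apply, comp_aeval]
    conv_rhs => rw [← aeval_X_left_apply F, ← AlgHom.comp_apply, comp_aeval]
    congr 2
    funext i
    rw [Ideal.Quotient.mkₐ_eq_mk, Ideal.Quotient.eq, Ideal.mem_span_singleton]
    rcases eq_or_ne i j with rfl | hij
    · simp [g]
    · simp [g, hij]
  rwa [hgF, map_zero, eq_comm, Ideal.Quotient.eq_zero_iff_mem, Ideal.mem_span_singleton] at hmk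

theorem isHomogeneous_sum_C_mul_X [Fintype σ] (e : σ → R) :
    (∑ i, C (e i) * X i).IsHomogeneous 1 :=
  IsHomogeneous.sum _ _ _ fun i _ => (isHomogeneous_X R i).C_mul (e i)

theorem sum_C_mul_X_ne_zero [Fintype σ] {e : σ → R} (he : e ≠ 0) : ∑ i, C (e i) * X i ≠ 0 := by
  refine fun h => he ?_
  ext j
  classical
  simpa [coeff_sum, coeff_C_mul, coeff_X, Finsupp.single_eq_single_iff] using
    congr_arg (coeff (Finsupp.single j 1)) h

theorem sum_C_mul_X_dvd_of_restrictLine_eq_zero {k Ω : Type*} [Field k] [Field Ω] [Infinite Ω]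
    [Algebra k Ω] {F : MvPolynomial (Fin 3) k} (hF : F.IsHomogeneous n) {A B : Fin 3 → Ω}
    (hAB : A ⨯₃ B ≠ 0) {c : Ω} {e : Fin 3 → k} (he : A ⨯₃ B = c • (algebraMap k Ω ∘ e))
    (hline : restrictLine F A B = 0) (hB : aeval B F = 0) : (∑ i, C (e i) * X i) ∣ F := by
  have he0 : e ≠ 0 := by
    rintro rfl
    exact hAB (by simp [he])
  refine sum_C_mul_X_dvd_of_forall_aeval_eq_zero (Ω := Ω) he0 fun x hx => ?_
  have hxW : x ⬝ᵥ A ⨯₃ B = 0 := by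
    rw [he, dotProduct_smul, smul_eq_mul, mul_eq_zero]
    right
    simpa [dotProduct, mul_comm] using hx
  obtain ⟨a, b, rfl⟩ := exists_eq_smul_add_smul_of_dotProduct_cross_eq_zero hAB hxW
  exact hF.aeval_smul_add_smul_eq_zero hline hB a b

end MvPolynomial

namespace FiniteField

variable {k L : Type*} [Field k] [Fintype k] [Field L] [Algebra k L]

theorem exists_algebraMap_eq_of_frobeniusAlgHom_eq {x : L} (hx : frobeniusAlgHom k L x = x) :
    ∃ a : k, algebraMap k L a = x := by
  set p : Polynomial k := Polynomial.X ^ Fintype.card k - Polynomial.X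
  have hp : p ≠ 0 := X_pow_card_sub_X_ne_zero k Fintype.one_lt_card
  -- `p` has all its roots in `k`, so it has no further roots in `L`
  have hroots : p.roots.map (algebraMap k L) = (p.map (algebraMap k L)).roots :=
    Polynomial.roots_map_of_injective_of_card_eq_natDegree (algebraMap k L).injective <| by
      rw [roots_X_pow_card_sub_X, X_pow_card_sub_X_natDegree_eq k Fintype.one_lt_card]
      rfl
  have hx' : x ∈ (p.map (algebraMap k L)).roots := by
    rw [Polynomial.mem_roots (Polynomial.map_ne_zero hp)]
    simpa [p, sub_eq_zero] using hx
  obtain ⟨a, -, ha⟩ := Multiset.mem_map.1 (hroots ▸ hx')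
  exact ⟨a, ha⟩

theorem frobeniusAlgHom_frobeniusAlgHom [Fintype L] (hL : Fintype.card L = Fintype.card k ^ 2)
    (x : L) : frobeniusAlgHom k L (frobeniusAlgHom k L x) = x := by
  simp [← pow_mul, ← sq, ← hL, pow_card]

theorem card_sub_one_le_mul_card_image_pow {K : Type*} [Field K] [Fintype K] [DecidableEq K]
    {n : ℕ} (hn : 0 < n) : Fintype.card K - 1 ≤ n * #((univ.erase 0).image (· ^ n : K → K)) := by
  rw [← card_univ, ← card_erase_of_mem (mem_univ (0 : K))]
  refine card_le_mul_card_image _ n fun b _ => ?_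
  calc #{x ∈ univ.erase 0 | x ^ n = b}
      ≤ #(Polynomial.nthRoots n b).toFinset := card_le_card fun x hx => by
        simpa [Polynomial.mem_nthRoots hn] using (mem_filter.1 hx).2
    _ ≤ n := (Multiset.toFinset_card_le _).trans (Polynomial.card_nthRoots n b)

end FiniteField


section Frobenius

open FiniteField

variable {k K : Type*} [Field k] [Fintype k] [Field K] [Algebra k K]

local notation "φ" => frobeniusAlgHom k K

theorem exists_eq_smul_algebraMap_comp_of_frobenius_eq_smul {σ : Type*} {P : σ → K} (hP : P ≠ 0)
    {c : K} (hc : φ ∘ P = c • P) : ∃ t : K, t ≠ 0 ∧ ∃ u : σ → k, P = t • (algebraMap k K ∘ u) := by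
  obtain ⟨j, hj⟩ : ∃ j, P j ≠ 0 := Function.ne_iff.1 hP
  have hcP : ∀ i, φ (P i) = c * P i := fun i => congr_fun hc i
  have hc0 : c ≠ 0 := by
    rintro rfl
    have := hcP j
    simp [hj] at this
  have hfix : ∀ i, φ ((P j)⁻¹ * P i) = (P j)⁻¹ * P i := fun i => by
    rw [map_mul, map_inv₀, hcP, hcP]
    field_simp
  choose u hu using fun i => exists_algebraMap_eq_of_frobeniusAlgHom_eq (hfix i)
  exact ⟨P j, hj, u, funext fun i => by simp [hu, hj]⟩

theorem exists_critical_point_of_frobenius_eq_smul {σ : Type*} {d : ℕ} {F : MvPolynomial σ k}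
    (hF : F.IsHomogeneous d) {P : σ → K} (hP : P ≠ 0) {c : K} (hc : φ ∘ P = c • P)
    (hcrit : ∀ i, aeval P (pderiv i F) = 0) :
    ∃ u : σ → k, u ≠ 0 ∧ ∀ i, eval u (pderiv i F) = 0 := by
  obtain ⟨t, ht, u, rfl⟩ := exists_eq_smul_algebraMap_comp_of_frobenius_eq_smul hP hc
  refine ⟨u, fun hu => hP (by simp [hu]), fun i => ?_⟩
  have := hcrit i
  rwa [hF.pderiv.aeval_smul, aeval_algebraMap_apply, mul_eq_zero, or_iff_right (pow_ne_zero _ ht),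
    FaithfulSMul.algebraMap_eq_zero_iff] at this

theorem aeval_eq_zero_of_frobenius_comp_eq {σ : Type*} {F : MvPolynomial σ k}
    (hfill : ∀ u : σ → k, u ≠ 0 → eval u F = 0) {R : σ → K} (hR : R ≠ 0) (hfix : φ ∘ R = R) :
    aeval R F = 0 := by
  choose u hu using fun i => exists_algebraMap_eq_of_frobeniusAlgHom_eq (congr_fun hfix i)
  obtain rfl : algebraMap k K ∘ u = R := funext hu
  rw [aeval_algebraMap_apply]
  exact (FaithfulSMul.algebraMap_eq_zero_iff k K).2 (hfill u fun h => hR (by simp [h]))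

theorem restrictLine_frobenius_eq_zero [Fintype K] (hK : Fintype.card K = Fintype.card k ^ 2)
    {σ : Type*} [Fintype σ] [DecidableEq σ] {d : ℕ} {F : MvPolynomial σ k}
    (hF : F.IsHomogeneous d) (hd : d ≤ Fintype.card k + 4)
    (hfill : ∀ u : σ → k, u ≠ 0 → eval u F = 0) {P : σ → K}
    (hind : LinearIndependent K ![P, φ ∘ P]) (hP : aeval P F = 0)
    (hcrit : ∀ i, aeval P (pderiv i F) = 0) : restrictLine F P (φ ∘ P) = 0 := by
  classical
  set q := Fintype.card k
  have hq : 2 ≤ q := Fintype.one_lt_card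
  have hφφ : ∀ x, φ (φ x) = x := frobeniusAlgHom_frobeniusAlgHom hK
  have hQ : aeval (φ ∘ P) F = 0 := (comp_aeval_apply P φ F).symm.trans (by rw [hP, map_zero])
  have hQcrit : ∀ i, aeval (φ ∘ P) (pderiv i F) = 0 := fun i =>
    (comp_aeval_apply P φ _).symm.trans (by rw [hcrit, map_zero])
  set S : Finset K := (univ.erase 0).image (· ^ (q - 1))
  refine Polynomial.eq_zero_of_X_sq_dvd_of_X_sq_dvd_reflect (natDegree_restrictLine_le _ _ hF)
    (X_sq_dvd_restrictLine _ _ hP hcrit) ?_ (S := S) ?_ ?_ ?_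
  · rw [reflect_restrictLine _ _ hF]
    exact X_sq_dvd_restrictLine _ _ hQ hQcrit
  · simp [S]
  · simp only [S, mem_image, mem_erase, mem_univ, and_true]
    rintro _ ⟨s, hs, rfl⟩
    have hR : aeval (s • P + φ s • (φ ∘ P)) F = 0 := by
      refine aeval_eq_zero_of_frobenius_comp_eq hfill (fun h => hs ?_) ?_
      · exact (LinearIndependent.pair_iff.1 hind s (φ s) h).1
      · ext i
        simp only [Function.comp_apply, Pi.add_apply, Pi.smul_apply, smul_eq_mul, map_add, map_mul,
          hφφ, add_comm]
    have hline : s • (P + s ^ (q - 1) • (φ ∘ P)) = s • P + φ s • (φ ∘ P) := by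
      rw [frobeniusAlgHom_apply, smul_add, smul_smul, mul_pow_sub_one (by omega)]
    have := hF.aeval_smul s (P + s ^ (q - 1) • (φ ∘ P))
    rw [hline, hR, eq_comm, mul_eq_zero, or_iff_right (pow_ne_zero _ hs)] at this
    rw [eval_restrictLine, this]
  · have hcard : q ^ 2 - 1 ≤ (q - 1) * #S :=
      hK ▸ FiniteField.card_sub_one_le_mul_card_image_pow (by omega)
    rw [← one_pow 2, Nat.sq_sub_sq, one_pow, mul_comm] at hcard
    have := Nat.le_of_mul_le_mul_left hcard (by omega)
    omega

theorem exists_cross_frobenius_eq_smul_algebraMap_comp [Fintype K]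
    (hK : Fintype.card K = Fintype.card k ^ 2) (P : Fin 3 → K) :
    ∃ (c : K) (e : Fin 3 → k), P ⨯₃ (φ ∘ P) = c • (algebraMap k K ∘ e) := by
  set W := P ⨯₃ (φ ∘ P)
  rcases eq_or_ne W 0 with hW | hW
  · exact ⟨0, 0, by simp [hW]⟩
  obtain ⟨j, hj⟩ : ∃ j, W j ≠ 0 := Function.ne_iff.1 hW
  have hφφP : φ ∘ φ ∘ P = P := funext fun i => frobeniusAlgHom_frobeniusAlgHom hK (P i)
  have hφW : ∀ i, φ (W i) = -W i := fun i => by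
    have := congr_fun (comp_crossProduct (φ : K →+* K) P (φ ∘ P)) i
    simp only [AlgHom.coe_toRingHom, Function.comp_apply] at this
    rw [this, hφφP, ← cross_anticomm]
    rfl
  have hfix : ∀ i, φ ((W j)⁻¹ * W i) = (W j)⁻¹ * W i := fun i => by
    rw [map_mul, map_inv₀, hφW, hφW, inv_neg, neg_mul_neg]
  choose e he using fun i => exists_algebraMap_eq_of_frobeniusAlgHom_eq (hfix i)
  exact ⟨W j, e, funext fun i => by simp [he, hj]⟩

theorem exists_linear_dvd_of_restrictLine_frobenius_eq_zero [Fintype K]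
    (hK : Fintype.card K = Fintype.card k ^ 2) {d : ℕ} {F : MvPolynomial (Fin 3) k}
    (hF : F.IsHomogeneous d) {P : Fin 3 → K} (hW : P ⨯₃ (φ ∘ P) ≠ 0)
    (hline : restrictLine F P (φ ∘ P) = 0) (hQ : aeval (φ ∘ P) F = 0) :
    ∃ L : MvPolynomial (Fin 3) k, L ≠ 0 ∧ L.IsHomogeneous 1 ∧ L ∣ F := by
  obtain ⟨c, e, he⟩ := exists_cross_frobenius_eq_smul_algebraMap_comp hK P
  have he0 : e ≠ 0 := by
    rintro rfl
    exact hW (by simp [he])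
  set ι := algebraMap K (AlgebraicClosure K)
  have hcross : (ι ∘ P) ⨯₃ (ι ∘ φ ∘ P) = ι c • (algebraMap k (AlgebraicClosure K) ∘ e) := by
    rw [← comp_crossProduct, he]
    ext i
    simp [ι, IsScalarTower.algebraMap_apply k K (AlgebraicClosure K)]
  refine ⟨_, sum_C_mul_X_ne_zero he0, isHomogeneous_sum_C_mul_X e,
    sum_C_mul_X_dvd_of_restrictLine_eq_zero hF ?_ hcross ?_ ?_⟩
  · rw [← comp_crossProduct]
    exact fun h => hW (funext fun i => by simpa [ι] using congr_fun h i)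
  · rw [← restrictLine_map, hline, Polynomial.map_zero]
  · rw [aeval_algebraMap_apply, hQ, map_zero]

end Frobenius

theorem vec3_eta {R : Type*} (u : Fin 3 → R) : ![u 0, u 1, u 2] = u := by
  ext i
  fin_cases i <;> rfl

theorem ne_zero_iff_fin_three {R : Type*} [Zero R] (u : Fin 3 → R) :
    u ≠ 0 ↔ (u 0, u 1, u 2) ≠ (0, 0, 0) := by
  simp [funext_iff, Fin.forall_fin_succ]

/-- A plane-filling curve of degree `d ≤ q + 4` which is smooth at all `𝔽_q`-points and
has no `𝔽_q`-linear component is smooth at every `𝔽_{q²}`-point. -/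
theorem smooth_at_Fq2_points_of_degree_le_q_add_four {Fq K : Type*} [Field Fq] [Fintype Fq]
    [Field K] [Fintype K] [Algebra Fq K]
    (q : ℕ) (hq : Fintype.card Fq = q) (hK : Fintype.card K = q ^ 2)
    (d : ℕ) (hd : d ≤ q + 4)
    (F : MvPolynomial (Fin 3) Fq) (hhom : F.IsHomogeneous d)
    (hfill : ∀ a b c : Fq, (a, b, c) ≠ (0, 0, 0) → eval ![a, b, c] F = 0)
    (hsmooth : ∀ a b c : Fq, (a, b, c) ≠ (0, 0, 0) →
      ¬ (eval ![a, b, c] (pderiv 0 F) = 0 ∧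
         eval ![a, b, c] (pderiv 1 F) = 0 ∧
         eval ![a, b, c] (pderiv 2 F) = 0))
    (hlin : ¬ ∃ L : MvPolynomial (Fin 3) Fq, L ≠ 0 ∧ L.IsHomogeneous 1 ∧ L ∣ F) :
    ∀ a b c : K, (a, b, c) ≠ (0, 0, 0) →
      ¬ (aeval ![a, b, c] F = 0 ∧
         aeval ![a, b, c] (pderiv 0 F) = 0 ∧
         aeval ![a, b, c] (pderiv 1 F) = 0 ∧
         aeval ![a, b, c] (pderiv 2 F) = 0) := by
  subst hq
  rintro a b c habc ⟨hP, h0, h1, h2⟩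
  set P : Fin 3 → K := ![a, b, c]
  have hP0 : P ≠ 0 := (ne_zero_iff_fin_three P).2 habc
  have hcrit : ∀ i, aeval P (pderiv i F) = 0 := by
    intro i
    fin_cases i
    exacts [h0, h1, h2]
  by_cases hW : P ⨯₃ (FiniteField.frobeniusAlgHom Fq K ∘ P) = 0
  · obtain ⟨c, hc⟩ := exists_eq_smul_of_cross_eq_zero hP0 hW
    obtain ⟨u, hu, hcritu⟩ := exists_critical_point_of_frobenius_eq_smul hhom hP0 hc hcrit
    refine hsmooth _ _ _ ((ne_zero_iff_fin_three u).1 hu) ?_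
    rw [vec3_eta]
    exact ⟨hcritu 0, hcritu 1, hcritu 2⟩
  · have hfill' : ∀ u : Fin 3 → Fq, u ≠ 0 → eval u F = 0 := fun u hu => by
      simpa [vec3_eta] using hfill _ _ _ ((ne_zero_iff_fin_three u).1 hu)
    have hline := restrictLine_frobenius_eq_zero hK hhom hd hfill'
      (crossProduct_ne_zero_iff_linearIndependent.1 hW) hP hcrit
    exact hlin (exists_linear_dvd_of_restrictLine_frobenius_eq_zero hK hhom hW hline
      ((comp_aeval_apply P _ F).symm.trans (by rw [hP, map_zero])))
end

section
/- Let q be an odd prime power, let 𝔽_q be the finite field with q elements, and let k ∈ 𝔽_q. Then no nonzero homogeneous polynomial of degree 1 in 𝔽_q[x,y,z] divides the polynomial F_k = x²(x^q y − x y^q) + y²(y^q z − y z^q) + (z² + k x²)(z^q x − z x^q); that is, the plane-filling curve C_k = {F_k = 0} has no 𝔽_q-linear component. -/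
/-!
Restrict `F_k` to an `𝔽_q`-rational line, parametrised as `t ↦ t • P + Q` with `P, Q ∈ 𝔽_q³`.
Since Frobenius fixes the coordinates of `P` and `Q`, every Moore determinant `u^q v - u v^q`
becomes `(t^q - t)` times the ordinary `2 × 2` minor of `P, Q`, so the restriction is `t^q - t`
times a quadratic `G` in `t`. If a linear form cutting out the line divided `F_k`, the restriction
would vanish and so would `G`; an explicit choice of `P, Q` in each case shows that `G ≠ 0`,
using `2 ≠ 0` in the generic case.
-/

open MvPolynomial

theorem Finsupp.degree_eq_one_iff {σ : Type*} (d : σ →₀ ℕ) :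
    d.degree = 1 ↔ ∃ i, d = single i 1 := by
  classical
  rw [show d.degree = Multiset.card (toMultiset d) from (card_toMultiset d).symm,
    Multiset.card_eq_one]
  simp only [toMultiset_eq_iff, Multiset.toFinsupp_singleton]

theorem MvPolynomial.IsHomogeneous.eq_sum_C_mul_X {σ R : Type*} [CommSemiring R] [Fintype σ]
    {L : MvPolynomial σ R} (hL : L.IsHomogeneous 1) :
    L = ∑ i, C (coeff (Finsupp.single i 1) L) * X i := by
  classical
  ext d
  simp only [coeff_sum, coeff_C_mul, coeff_X, mul_ite, mul_one, mul_zero]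
  by_cases hd : d.degree = 1
  · obtain ⟨i, rfl⟩ := (Finsupp.degree_eq_one_iff d).mp hd
    simp [Finsupp.single_left_inj one_ne_zero]
  · rw [hL.coeff_eq_zero hd, Finset.sum_eq_zero]
    rintro i -
    rw [if_neg]
    rintro rfl
    exact hd (Finsupp.degree_single i 1)

theorem Polynomial.eq_zero_of_quadratic_eq_zero {R : Type*} [Semiring R] {a b c : R}
    (h : C a * X ^ 2 + C b * X + C c = 0) : a = 0 ∧ b = 0 ∧ c = 0 := by
  have hcoeff (n : ℕ) := congrArg (coeff · n) h
  exact ⟨by simpa using hcoeff 2, by simpa using hcoeff 1, by simpa using hcoeff 0⟩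

theorem Polynomial.C_mul_X_add_C_pow_card {K : Type*} [Field K] [Fintype K] (a b : K) :
    (C a * X + C b) ^ Fintype.card K = C a * X ^ Fintype.card K + C b := by
  rw [← FiniteField.expand_card]
  simp

section

variable {F : Type*} [Field F]

noncomputable def restrictToLine (P Q : Fin 3 → F) :
    MvPolynomial (Fin 3) F →ₐ[F] Polynomial F :=
  aeval fun i => Polynomial.C (P i) * Polynomial.X + Polynomial.C (Q i)

@[simp]
theorem restrictToLine_X (P Q : Fin 3 → F) (i : Fin 3) :
    restrictToLine P Q (X i) = Polynomial.C (P i) * Polynomial.X + Polynomial.C (Q i) :=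
  aeval_X _ i

@[simp]
theorem restrictToLine_C (P Q : Fin 3 → F) (a : F) :
    restrictToLine P Q (C a) = Polynomial.C a :=
  algHom_C _ a

theorem restrictToLine_X_pow_card_mul_X_sub [Fintype F] (P Q : Fin 3 → F) (i j : Fin 3) :
    restrictToLine P Q (X i ^ Fintype.card F * X j - X i * X j ^ Fintype.card F) =
      (Polynomial.X ^ Fintype.card F - Polynomial.X) * Polynomial.C (P i * Q j - P j * Q i) := by
  simp only [map_sub, map_mul, map_pow, restrictToLine_X, Polynomial.C_mul_X_add_C_pow_card]
  ring

/-- `F_k` with each Moore determinant `u^q v - u v^q` replaced by the corresponding minor of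
`P, Q`. -/
noncomputable def planeFillingCofactor (k : F) (P Q : Fin 3 → F) : MvPolynomial (Fin 3) F :=
  X 0 ^ 2 * C (P 0 * Q 1 - P 1 * Q 0) + X 1 ^ 2 * C (P 1 * Q 2 - P 2 * Q 1)
    + (X 2 ^ 2 + C k * X 0 ^ 2) * C (P 2 * Q 0 - P 0 * Q 2)

variable [Fintype F]

theorem restrictToLine_planeFillingPoly (k : F) (P Q : Fin 3 → F) :
    restrictToLine P Q (planeFillingPoly (Fintype.card F) k) =
      (Polynomial.X ^ Fintype.card F - Polynomial.X) *
        restrictToLine P Q (planeFillingCofactor k P Q) := by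
  simp only [planeFillingPoly, planeFillingCofactor, map_add, map_mul,
    restrictToLine_X_pow_card_mul_X_sub, restrictToLine_C]
  ring

theorem not_dvd_planeFillingPoly_of_restrictToLine {k : F} {P Q : Fin 3 → F}
    {L : MvPolynomial (Fin 3) F} (hL : restrictToLine P Q L = 0)
    (hcof : restrictToLine P Q (planeFillingCofactor k P Q) ≠ 0) :
    ¬ L ∣ planeFillingPoly (Fintype.card F) k := by
  intro hdvd
  have h := map_dvd (restrictToLine P Q) hdvd
  rw [hL, zero_dvd_iff, restrictToLine_planeFillingPoly] at h
  exact mul_ne_zero (FiniteField.X_pow_card_sub_X_ne_zero F Fintype.one_lt_card) hcof h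

variable (k : F) {a b c : F}

theorem not_dvd_planeFillingPoly_of_coeff_z_ne_zero (h2 : (2 : F) ≠ 0) (hc : c ≠ 0) :
    ¬ C a * X 0 + C b * X 1 + C c * X 2 ∣ planeFillingPoly (Fintype.card F) k := by
  apply not_dvd_planeFillingPoly_of_restrictToLine (P := ![c, 0, -a]) (Q := ![0, c, -b])
  · simp only [map_add, map_mul, map_neg, map_zero, restrictToLine_X, restrictToLine_C,
      Matrix.cons_val]
    ring
  have hcof : restrictToLine ![c, 0, -a] ![0, c, -b]
      (planeFillingCofactor k ![c, 0, -a] ![0, c, -b]) =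
      Polynomial.C c * (Polynomial.C (c ^ 3 + a ^ 2 * b + k * b * c ^ 2) * Polynomial.X ^ 2
        + Polynomial.C (2 * a * b ^ 2) * Polynomial.X + Polynomial.C (a * c ^ 2 + b ^ 3)) := by
    simp only [planeFillingCofactor, map_add, map_sub, map_mul, map_pow, map_neg, map_zero,
      map_ofNat, restrictToLine_X, restrictToLine_C, Matrix.cons_val]
    ring
  rw [hcof]
  refine mul_ne_zero (Polynomial.C_ne_zero.mpr hc) fun h => ?_
  obtain ⟨hT2, hT1, hT0⟩ := Polynomial.eq_zero_of_quadratic_eq_zero h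
  have hb : b ≠ 0 := by rintro rfl; exact hc (by simpa using hT2)
  have ha : a = 0 := by simpa [h2, hb] using hT1
  exact hb (by simpa [ha] using hT0)

theorem not_dvd_planeFillingPoly_of_coeff_y_ne_zero (hb : b ≠ 0) :
    ¬ C a * X 0 + C b * X 1 ∣ planeFillingPoly (Fintype.card F) k := by
  apply not_dvd_planeFillingPoly_of_restrictToLine (P := ![b, -a, 0]) (Q := ![0, 0, b])
  · simp only [map_add, map_mul, map_neg, map_zero, restrictToLine_X, restrictToLine_C,
      Matrix.cons_val]
    ring
  have hcof : restrictToLine ![b, -a, 0] ![0, 0, b]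
      (planeFillingCofactor k ![b, -a, 0] ![0, 0, b]) =
      Polynomial.C (-(a ^ 3 * b + k * b ^ 4)) * Polynomial.X ^ 2
        + Polynomial.C 0 * Polynomial.X + Polynomial.C (-b ^ 4) := by
    simp only [planeFillingCofactor, map_add, map_sub, map_mul, map_pow, map_neg, map_zero,
      restrictToLine_X, restrictToLine_C, Matrix.cons_val]
    ring
  rw [hcof]
  exact fun h => hb (by simpa using (Polynomial.eq_zero_of_quadratic_eq_zero h).2.2)

theorem not_C_mul_X_zero_dvd_planeFillingPoly :
    ¬ C a * X 0 ∣ planeFillingPoly (Fintype.card F) k := by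
  apply not_dvd_planeFillingPoly_of_restrictToLine (P := ![0, 1, 0]) (Q := ![0, 0, 1]) <;>
  simp [planeFillingCofactor]

end

/-- For odd `q`, the plane-filling curve `C_k` has no `𝔽_q`-linear component: no nonzero
homogeneous degree-1 polynomial over `𝔽_q` divides `F_k`. -/
theorem no_linear_component {F : Type*} [Field F] [Fintype F]
    (q : ℕ) (hq : Fintype.card F = q) (hodd : Odd q) (k : F) :
    ¬ ∃ L : MvPolynomial (Fin 3) F, L ≠ 0 ∧ L.IsHomogeneous 1 ∧
      L ∣ planeFillingPoly q k := by
  subst hq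
  rintro ⟨L, -, hL, hdvd⟩
  have h2 : (2 : F) ≠ 0 := Ring.two_ne_zero fun hchar =>
    Nat.not_even_iff_odd.mpr hodd (Nat.even_iff.mpr (FiniteField.even_card_iff_char_two.mp hchar))
  rw [hL.eq_sum_C_mul_X, Fin.sum_univ_three] at hdvd
  by_cases hc : coeff (Finsupp.single 2 1) L = 0
  · rw [hc, C_0, zero_mul, add_zero] at hdvd
    by_cases hb : coeff (Finsupp.single 1 1) L = 0
    · rw [hb, C_0, zero_mul, add_zero] at hdvd
      exact not_C_mul_X_zero_dvd_planeFillingPoly k hdvd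
    · exact not_dvd_planeFillingPoly_of_coeff_y_ne_zero k hb hdvd
  · exact not_dvd_planeFillingPoly_of_coeff_z_ne_zero k h2 hc hdvd
end

section
/- Let q be a prime power, let 𝔽_q be the finite field with q elements, and let K be an algebraic closure of 𝔽_q. Let f, g ∈ 𝔽_q[x,y,z] be homogeneous polynomials, and for each k ∈ 𝔽_q let X_k denote the plane curve defined by f + k·g = 0. Suppose that for every integer s ≥ 1 there exists k ∈ 𝔽_q such that X_k is smooth at all of its points with coordinates in the subfield of K with q^s elements (i.e., there is no nonzero triple (a,b,c) ∈ K³, all of whose coordinates satisfy t^{q^s} = t, at which f + k·g and all three of its partial derivatives vanish). Then there exists ℓ ∈ 𝔽_q such that X_ℓ is smooth: there is no nonzero triple (a,b,c) ∈ K³ at which f + ℓ·g and all three of its partial derivatives vanish. -/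
open MvPolynomial

/-- Every triple of elements of the algebraic closure of `𝔽_q` lies in a common finite
subfield, i.e. is fixed by some power of Frobenius. -/
theorem frob_fix_aux {Fq K : Type*} [Field Fq] [Fintype Fq] [Field K] [Algebra Fq K]
    [IsAlgClosure Fq K]
    (q : ℕ) (hq : Fintype.card Fq = q) (a b c : K) :
    ∃ s : ℕ, 1 ≤ s ∧ a ^ q ^ s = a ∧ b ^ q ^ s = b ∧ c ^ q ^ s = c := by
  have halg : Algebra.IsAlgebraic Fq K := IsAlgClosure.isAlgebraic
  set S : Set K := {a, b, c} with hS
  haveI : Finite S := Set.toFinite _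
  have hint : ∀ x ∈ S, IsIntegral Fq x := fun x _ => (halg.isAlgebraic x).isIntegral
  haveI := IntermediateField.finiteDimensional_adjoin (K := Fq) (L := K) hint
  set L := IntermediateField.adjoin Fq S with hL
  haveI : Finite L := Module.finite_of_finite Fq
  haveI : Fintype L := Fintype.ofFinite _
  have hcard : Fintype.card L = q ^ Module.finrank Fq L := by
    rw [← hq]; exact Module.card_eq_pow_finrank
  have key : ∀ x : K, x ∈ L → x ^ q ^ Module.finrank Fq L = x := by
    intro x hx
    have := FiniteField.pow_card (⟨x, hx⟩ : L)
    rw [hcard] at this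
    simpa using congrArg Subtype.val this
  exact ⟨Module.finrank Fq L, Module.finrank_pos,
    key a (IntermediateField.subset_adjoin Fq S (by simp [hS])),
    key b (IntermediateField.subset_adjoin Fq S (by simp [hS])),
    key c (IntermediateField.subset_adjoin Fq S (by simp [hS]))⟩

/-- Being fixed by `q^s`-power Frobenius implies being fixed by `q^t`-power Frobenius
whenever `s ∣ t`. -/
theorem pow_dvd_fix_aux {K : Type*} [Field K] {q s t : ℕ} (hst : s ∣ t) {a : K}
    (ha : a ^ q ^ s = a) : a ^ q ^ t = a := by
  obtain ⟨u, rfl⟩ := hst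
  induction u with
  | zero => simp
  | succ n ih =>
    have : a ^ q ^ (s * (n + 1)) = (a ^ q ^ (s * n)) ^ q ^ s := by
      rw [← pow_mul, ← pow_add, mul_add, mul_one]
    rw [this, ih, ha]

/-- If, for every `s ≥ 1`, some member `X_k` of a pencil of plane curves over `𝔽_q` is
smooth at all of its points with coordinates in the subfield `𝔽_{q^s}` of the algebraic
closure `K`, then some member `X_ℓ` of the pencil is smooth. -/
theorem exists_smooth_member_of_pencil {Fq K : Type*} [Field Fq] [Fintype Fq]
    [Field K] [Algebra Fq K] [IsAlgClosure Fq K]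
    (q : ℕ) (hq : Fintype.card Fq = q)
    (f g : MvPolynomial (Fin 3) Fq)
    (hf : ∃ d, f.IsHomogeneous d) (hg : ∃ d, g.IsHomogeneous d)
    (H : ∀ s : ℕ, 1 ≤ s → ∃ k : Fq, ∀ a b c : K,
      (a, b, c) ≠ (0, 0, 0) →
      a ^ q ^ s = a → b ^ q ^ s = b → c ^ q ^ s = c →
      ¬ (aeval ![a, b, c] (f + C k * g) = 0 ∧
         aeval ![a, b, c] (pderiv 0 (f + C k * g)) = 0 ∧
         aeval ![a, b, c] (pderiv 1 (f + C k * g)) = 0 ∧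
         aeval ![a, b, c] (pderiv 2 (f + C k * g)) = 0)) :
    ∃ l : Fq, ∀ a b c : K, (a, b, c) ≠ (0, 0, 0) →
      ¬ (aeval ![a, b, c] (f + C l * g) = 0 ∧
         aeval ![a, b, c] (pderiv 0 (f + C l * g)) = 0 ∧
         aeval ![a, b, c] (pderiv 1 (f + C l * g)) = 0 ∧
         aeval ![a, b, c] (pderiv 2 (f + C l * g)) = 0) := by
  -- for each `n`, choose `k` that works for `s = (n+1)!`
  choose ch hch using fun n : ℕ => H (n + 1).factorial (Nat.factorial_pos _)
  -- some value `k` is chosen infinitely often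
  obtain ⟨k, hk⟩ := Finite.exists_infinite_fiber ch
  refine ⟨k, fun a b c hne hsing => ?_⟩
  obtain ⟨s, hs1, ha, hb, hc⟩ := frob_fix_aux q hq a b c
  obtain ⟨n, hn, hns⟩ := (Set.infinite_coe_iff.mp hk).exists_gt s
  have hdvd : s ∣ (n + 1).factorial :=
    Nat.dvd_factorial hs1 (le_trans (le_of_lt hns) (Nat.le_succ n))
  have := hch n a b c hne (pow_dvd_fix_aux hdvd ha) (pow_dvd_fix_aux hdvd hb)
    (pow_dvd_fix_aux hdvd hc)
  rw [show ch n = k from hn] at this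
  exact this hsing
end
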